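/- arXiv:2412.10082 — 7 statements merged into one kernel-verified Lean document; each statement's English description precedes it below -/
import Mathlib

section
/- Let G be a finite simple graph with Grundy number γ. Then there exists a Grundy coloring (C_1, …, C_γ) of G and an index i ∈ {1, …, γ} such that |C_j| > 1 for all j ≤ i and |C_j| = 1 for all j > i. -/
variable {V : Type*} [Fintype V] [DecidableEq V]

/-- A Grundy coloring of the vertex set `X` of `G`: an ordered partition of `X`
into nonempty independent sets such that every vertex of the `i`-th class has a
neighbor in every earlier class. -/
def GrundyColoringOn (G : SimpleGraph V) (X : Finset V) (C : List (Finset V)) : Prop :=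
  (∀ A ∈ C, A.Nonempty) ∧
  C.Pairwise Disjoint ∧
  (∀ v, v ∈ X ↔ ∃ A ∈ C, v ∈ A) ∧
  (∀ A ∈ C, ∀ u ∈ A, ∀ w ∈ A, ¬ G.Adj u w) ∧
  (∀ i j : ℕ, ∀ hi : i < C.length, ∀ hj : j < C.length, j < i →
     ∀ v ∈ C.get ⟨i, hi⟩, ∃ u ∈ C.get ⟨j, hj⟩, G.Adj u v)

/-- The set of lengths of Grundy colorings of `X` in `G`; its greatest element
is the Grundy number of the induced subgraph `G[X]`. -/
def grundySet (G : SimpleGraph V) (X : Finset V) : Set ℕ :=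
  {n | ∃ C : List (Finset V), GrundyColoringOn G X C ∧ C.length = n}

/-- Weight of a coloring: sum of positions of singleton classes. -/
def gval (C : List (Finset V)) : ℕ :=
  ∑ j ∈ Finset.range C.length, if (C.getD j ∅).card = 1 then j else 0

lemma gval_le {C : List (Finset V)} {γ : ℕ} (h : C.length = γ) : gval C ≤ γ * γ := by
  unfold gval
  rw [h]
  calc ∑ j ∈ Finset.range γ, (if (C.getD j ∅).card = 1 then j else 0)
      ≤ ∑ j ∈ Finset.range γ, γ := by
        refine Finset.sum_le_sum fun j hj => ?_
        have : j < γ := Finset.mem_range.mp hj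
        split_ifs <;> omega
    _ = γ * γ := by rw [Finset.sum_const, Finset.card_range, smul_eq_mul]

lemma grundy_swap (G : SimpleGraph V) (X : Finset V) (C : List (Finset V)) (m : ℕ)
    (hm : m + 1 < C.length) (hC : GrundyColoringOn G X C)
    (h1 : (C.getD m ∅).card = 1) (h2 : (C.getD (m+1) ∅).card ≠ 1) :
    ∃ C' : List (Finset V), GrundyColoringOn G X C' ∧ C'.length = C.length ∧
      gval C' = gval C + 1 := by
  obtain ⟨hne, hdis, hpart, hind, hadj⟩ := hC
  have hm' : m < C.length := Nat.lt_of_succ_lt hm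
  set σ : ℕ → ℕ := fun j => if m + 1 = j then m else if m = j then m + 1 else j with hσ
  have hσσ : ∀ j, σ (σ j) = j := by
    intro j
    simp only [hσ]
    split_ifs <;> omega
  have hσlt : ∀ j, j < C.length → σ j < C.length := by
    intro j hj
    simp only [hσ]
    split_ifs <;> omega
  set C' : List (Finset V) := (C.set m (C.getD (m+1) ∅)).set (m+1) (C.getD m ∅) with hC'def
  have hlen : C'.length = C.length := by simp [hC'def]
  have hC'σ : ∀ j (hj : j < C'.length), C'[j] = C.getD (σ j) ∅ := by
    intro j hj
    have hj' : j < C.length := by rwa [hlen] at hj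
    simp only [hC'def, List.getElem_set, hσ]
    split_ifs <;> first
      | rfl
      | (rw [List.getD_eq_getElem _ _ hj'])
  have hmem : ∀ A, A ∈ C' ↔ A ∈ C := by
    intro A
    simp only [List.mem_iff_getElem]
    constructor
    · rintro ⟨j, hj, rfl⟩
      have hj' : j < C.length := by rwa [hlen] at hj
      exact ⟨σ j, hσlt j hj',
        (List.getD_eq_getElem _ _ (hσlt j hj')).symm.trans (hC'σ j hj).symm⟩
    · rintro ⟨j, hj, rfl⟩
      refine ⟨σ j, by rw [hlen]; exact hσlt j hj, ?_⟩
      rw [hC'σ (σ j) (by rw [hlen]; exact hσlt j hj), hσσ j, List.getD_eq_getElem _ _ hj]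
  have hdis2 : ∀ a b, a < C.length → b < C.length → a ≠ b →
      Disjoint (C.getD a ∅) (C.getD b ∅) := by
    intro a b ha hb hab
    rw [List.getD_eq_getElem _ _ ha, List.getD_eq_getElem _ _ hb]
    rcases lt_or_gt_of_ne hab with h | h
    · exact List.pairwise_iff_getElem.mp hdis a b ha hb h
    · exact (List.pairwise_iff_getElem.mp hdis b a hb ha h).symm
  have hσinj : ∀ a b, σ a = σ b → a = b := by
    intro a b hab
    have := congrArg σ hab
    rwa [hσσ, hσσ] at this
  have hadj' : ∀ i j, ∀ hi : i < C.length, ∀ hj : j < C.length, j < i →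
      ∀ v ∈ C.getD i ∅, ∃ u ∈ C.getD j ∅, G.Adj u v := by
    intro i j hi hj hji
    rw [List.getD_eq_getElem _ _ hi, List.getD_eq_getElem _ _ hj]
    exact hadj i j hi hj hji
  refine ⟨C', ⟨?_, ?_, ?_, ?_, ?_⟩, hlen, ?_⟩
  · intro A hA
    exact hne A ((hmem A).1 hA)
  · rw [List.pairwise_iff_getElem]
    intro a b ha hb hab
    have ha' : a < C.length := by rwa [hlen] at ha
    have hb' : b < C.length := by rwa [hlen] at hb
    rw [hC'σ a ha, hC'σ b hb]
    exact hdis2 _ _ (hσlt a ha') (hσlt b hb')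
      (fun h => absurd (hσinj a b h) (Nat.ne_of_lt hab))
  · intro v
    rw [hpart v]
    constructor
    · rintro ⟨A, hA, hv⟩
      exact ⟨A, (hmem A).2 hA, hv⟩
    · rintro ⟨A, hA, hv⟩
      exact ⟨A, (hmem A).1 hA, hv⟩
  · intro A hA
    exact hind A ((hmem A).1 hA)
  · intro i j hi hj hji v hv
    have hi' : i < C.length := by rwa [hlen] at hi
    have hj' : j < C.length := by rwa [hlen] at hj
    rw [List.get_eq_getElem, hC'σ i hi] at hv
    rw [List.get_eq_getElem, hC'σ j hj]
    by_cases hcase : j = m ∧ i = m + 1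
    · have hjm : j = m := hcase.1
      have him : i = m + 1 := hcase.2
      have hσj : σ j = m + 1 := by rw [hjm]; simp [hσ]
      have hσi : σ i = m := by rw [him]; simp [hσ]
      rw [hσi] at hv
      rw [hσj]
      -- v is the unique element of C[m]; any w ∈ C[m+1] is adjacent to v
      obtain ⟨w, hw⟩ := hne (C.getD (m+1) ∅)
        (by rw [List.getD_eq_getElem _ _ hm]; exact List.getElem_mem hm)
      obtain ⟨u, hu, huw⟩ := hadj' (m+1) m hm hm' (Nat.lt_succ_self m) w hw
      have huv : u = v := by
        have := Finset.card_le_one.mp (le_of_eq h1)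
        exact this u hu v hv
      exact ⟨w, hw, (huv ▸ huw).symm⟩
    · have hlt : σ j < σ i := by
        rcases not_and_or.mp hcase with h | h <;>
          (simp only [hσ]; split_ifs <;> omega)
      exact hadj' (σ i) (σ j) (hσlt i hi') (hσlt j hj') hlt v hv
  · -- gval computation
    have hgd : ∀ j ∈ Finset.range C.length, C'.getD j ∅ = C.getD (σ j) ∅ := by
      intro j hj
      rw [Finset.mem_range] at hj
      rw [List.getD_eq_getElem _ _ (by rw [hlen]; exact hj), hC'σ j (by rw [hlen]; exact hj)]
    have hstep : gval C' =
        ∑ j ∈ Finset.range C.length, (if (C.getD (σ j) ∅).card = 1 then j else 0) := by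
      unfold gval
      rw [hlen]
      exact Finset.sum_congr rfl fun j hj => by rw [hgd j hj]
    have hms : m ∈ Finset.range C.length := Finset.mem_range.mpr hm'
    have hm1s : m + 1 ∈ (Finset.range C.length).erase m :=
      Finset.mem_erase.mpr ⟨by omega, Finset.mem_range.mpr hm⟩
    have esplit : ∀ g : ℕ → ℕ, ∑ j ∈ Finset.range C.length, g j =
        g m + (g (m+1) + ∑ j ∈ ((Finset.range C.length).erase m).erase (m+1), g j) := by
      intro g
      rw [Finset.add_sum_erase _ g hm1s, Finset.add_sum_erase _ g hms]
    rw [hstep, esplit (fun j => if (C.getD (σ j) ∅).card = 1 then j else 0)]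
    unfold gval
    rw [esplit (fun j => if (C.getD j ∅).card = 1 then j else 0)]
    have hσm : σ m = m + 1 := by simp [hσ]
    have hσm1 : σ (m+1) = m := by simp [hσ]
    have hrest : ∑ j ∈ ((Finset.range C.length).erase m).erase (m+1),
          (if (C.getD (σ j) ∅).card = 1 then j else 0) =
        ∑ j ∈ ((Finset.range C.length).erase m).erase (m+1),
          (if (C.getD j ∅).card = 1 then j else 0) := by
      refine Finset.sum_congr rfl fun j hj => ?_
      have h1j : j ≠ m + 1 := (Finset.mem_erase.mp hj).1
      have h2j : j ≠ m := (Finset.mem_erase.mp (Finset.mem_erase.mp hj).2).1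
      have : σ j = j := by simp only [hσ]; split_ifs <;> omega
      rw [this]
    simp only [hσm, hσm1, if_pos h1, if_neg h2]
    rw [hrest]
    omega

theorem stmt3 (G : SimpleGraph V) (γ : ℕ)
    (hγ : IsGreatest (grundySet G Finset.univ) γ) :
    ∃ C : List (Finset V), GrundyColoringOn G Finset.univ C ∧ C.length = γ ∧
      ∃ i ≤ γ, ∀ j, ∀ hj : j < C.length,
        (j < i → 1 < (C.get ⟨j, hj⟩).card) ∧ (i ≤ j → (C.get ⟨j, hj⟩).card = 1) := by
  classical
  obtain ⟨⟨C0, hC0, hC0len⟩, _hub⟩ := hγ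
  set P : ℕ → Prop := fun n => ∃ C : List (Finset V),
    GrundyColoringOn G Finset.univ C ∧ C.length = γ ∧ gval C = n with hP
  set N := Nat.findGreatest P (γ * γ) with hN
  have hPN : P N := Nat.findGreatest_spec (gval_le hC0len) ⟨C0, hC0, hC0len, rfl⟩
  obtain ⟨C, hC, hClen, hgvC⟩ := hPN
  -- no singleton class is immediately followed by a non-singleton class
  have noswap : ∀ m, m + 1 < C.length → (C.getD m ∅).card = 1 →
      (C.getD (m+1) ∅).card = 1 := by
    intro m hm h1
    by_contra h2
    obtain ⟨C', hC', hlen', hgv'⟩ := grundy_swap G Finset.univ C m hm hC h1 h2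
    have hP' : P (N + 1) := ⟨C', hC', by rw [hlen', hClen], by rw [hgv', hgvC]⟩
    have hb : N + 1 ≤ γ * γ := by
      have := gval_le (C := C') (by rw [hlen', hClen])
      omega
    have := Nat.le_findGreatest hb hP'
    omega
  have hmono : ∀ d j, j + d < C.length → (C.getD j ∅).card = 1 →
      (C.getD (j + d) ∅).card = 1 := by
    intro d
    induction d with
    | zero => intro j _ h; simpa using h
    | succ d ih =>
      intro j h h1
      have h' := ih j (by omega) h1
      have h2 := noswap (j + d) (by omega) h'
      rw [show j + (d + 1) = (j + d) + 1 from by omega]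
      exact h2
  have hcard_pos : ∀ j (hj : j < C.length), 0 < (C.getD j ∅).card := by
    intro j hj
    rw [List.getD_eq_getElem _ _ hj]
    exact Finset.card_pos.mpr (hC.1 _ (List.getElem_mem hj))
  have hget_getD : ∀ j (hj : j < C.length), C.get ⟨j, hj⟩ = C.getD j ∅ := by
    intro j hj
    rw [List.get_eq_getElem, List.getD_eq_getElem _ _ hj]
  by_cases hex : ∃ j, j < C.length ∧ (C.getD j ∅).card = 1
  · set i := Nat.find hex with hi
    have hspec := Nat.find_spec hex
    refine ⟨C, hC, hClen, i, by omega, ?_⟩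
    intro j hj
    constructor
    · intro hji
      have hmin := Nat.find_min hex hji
      rw [hget_getD j hj]
      have := hcard_pos j hj
      have : (C.getD j ∅).card ≠ 1 := fun h => hmin ⟨by omega, h⟩
      have := hcard_pos j hj
      omega
    · intro hij
      rw [hget_getD j hj]
      have := hmono (j - i) i (by omega) hspec.2
      have hji : i + (j - i) = j := by omega
      rwa [hji] at this
  · push_neg at hex
    refine ⟨C, hC, hClen, γ, le_refl γ, ?_⟩
    intro j hj
    constructor
    · intro _
      rw [hget_getD j hj]
      have := hcard_pos j hj
      have := hex j hj
      omega
    · intro h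
      omega
end

section
/- Let (C_1, …, C_γ) be a Grundy coloring of a graph G and suppose |C_x| = 1 for some index x. Then the reordered sequence (C_1, …, C_{x−1}, C_{x+1}, …, C_γ, C_x), obtained by moving the singleton class C_x to the end, is also a Grundy coloring of G. -/
variable {V : Type*} [Fintype V] [DecidableEq V]

/-! The Grundy condition says that the list of classes is pairwise related by "every vertex of
the later class has a neighbour in the earlier class". Deleting a class preserves this, and a
singleton `{v}` may follow any other class `A`: if `A` came before it this is given, and if `A`
came after it then every vertex of the nonempty set `A` is adjacent to `v`. -/

section

variable {W : Type*}

def Dominates (G : SimpleGraph W) (A B : Finset W) : Prop :=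
  ∀ v ∈ B, ∃ u ∈ A, G.Adj u v

theorem Dominates.symm_singleton {G : SimpleGraph W} {A : Finset W} {v : W}
    (h : Dominates G {v} A) (hA : A.Nonempty) : Dominates G A {v} := by
  obtain ⟨a, ha⟩ := hA
  obtain ⟨u, hu, hua⟩ := h a ha
  rw [Finset.mem_singleton] at hu
  intro w hw
  rw [Finset.mem_singleton.1 hw, ← hu]
  exact ⟨a, ha, hua.symm⟩

theorem grundyColoringOn_iff (G : SimpleGraph W) (X : Finset W) (C : List (Finset W)) :
    GrundyColoringOn G X C ↔
      (∀ A ∈ C, A.Nonempty) ∧ C.Pairwise Disjoint ∧ (∀ v, v ∈ X ↔ ∃ A ∈ C, v ∈ A) ∧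
      (∀ A ∈ C, ∀ u ∈ A, ∀ w ∈ A, ¬ G.Adj u w) ∧ C.Pairwise (Dominates G) := by
  simp only [GrundyColoringOn, List.pairwise_iff_getElem, List.get_eq_getElem]
  exact Iff.rfl.and <| Iff.rfl.and <| Iff.rfl.and <| Iff.rfl.and
    ⟨fun h j i hj hi hji => h i j hi hj hji, fun h i j hi hj hji => h j i hj hi hji⟩

theorem GrundyColoringOn.of_perm {G : SimpleGraph W} {X : Finset W} {C D : List (Finset W)}
    (hC : GrundyColoringOn G X C) (hCD : C.Perm D) (hD : D.Pairwise (Dominates G)) :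
    GrundyColoringOn G X D := by
  obtain ⟨hne, hdisj, hcov, hind, -⟩ := (grundyColoringOn_iff G X C).1 hC
  simp only [hCD.mem_iff] at hne hcov hind
  exact (grundyColoringOn_iff G X D).2
    ⟨hne, (hCD.pairwise_iff fun h => h.symm).1 hdisj, hcov, hind, hD⟩

theorem dominates_getElem_singleton {G : SimpleGraph W} {C : List (Finset W)}
    (hne : ∀ A ∈ C, A.Nonempty) (hC : C.Pairwise (Dominates G)) {x j : ℕ} (hx : x < C.length)
    (hj : j < C.length) (hjx : j ≠ x) {v : W} (hv : C[x] = {v}) : Dominates G C[j] C[x] := by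
  rcases hjx.lt_or_gt with hlt | hgt
  · exact List.pairwise_iff_getElem.1 hC j x hj hx hlt
  · have hxj := List.pairwise_iff_getElem.1 hC x j hx hj hgt
    rw [hv] at hxj ⊢
    exact hxj.symm_singleton (hne _ (List.getElem_mem hj))

end

/-- Moving a singleton color class to the end of a Grundy coloring yields a Grundy coloring. -/
theorem stmt4 (G : SimpleGraph V) (C : List (Finset V))
    (hC : GrundyColoringOn G Finset.univ C)
    (x : ℕ) (hx : x < C.length) (hcard : (C.get ⟨x, hx⟩).card = 1) :
    GrundyColoringOn G Finset.univ (C.eraseIdx x ++ [C.get ⟨x, hx⟩]) := by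
  simp only [List.get_eq_getElem] at hcard ⊢
  obtain ⟨v, hv⟩ := Finset.card_eq_one.1 hcard
  obtain ⟨hne, -, -, -, hdom⟩ := (grundyColoringOn_iff G _ C).1 hC
  have hperm : C.Perm (C.eraseIdx x ++ [C[x]]) :=
    (List.getElem_cons_eraseIdx_perm hx).symm.trans (List.perm_append_singleton _ _).symm
  refine hC.of_perm hperm <| List.pairwise_append.2
    ⟨hdom.eraseIdx x, List.pairwise_singleton _ _, ?_⟩
  rintro A hA B hB
  rw [List.mem_singleton] at hB
  obtain ⟨j, hj, hjx, rfl⟩ := List.mem_eraseIdx_iff_getElem.1 hA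
  exact hB ▸ dominates_getElem_singleton hne hdom hx hj hjx hv
end

section
/- Let G be a finite simple graph, R a clique modulator of G with |R| ≤ r, and γ the Grundy number of G. Then there exists a set Q ⊆ V(G)∖R with |Q| ≤ r such that: for every ordering σ_2 of V(G)∖(R ∪ Q), there exists an ordering σ_1 of R ∪ Q such that the first-fit coloring of G with respect to the concatenated ordering σ_1σ_2 uses exactly γ colors. -/
variable {V : Type*} [Fintype V] [DecidableEq V]

/-- First-fit coloring: process vertices in the order given by `σ`, assigning each
the smallest positive color not used by its already-colored neighbors
(uncolored vertices have value `0`). -/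
noncomputable def firstFit (G : SimpleGraph V) (σ : List V) : V → ℕ :=
  σ.foldl
    (fun c v => Function.update c v (sInf {k | 1 ≤ k ∧ ∀ u, G.Adj u v → c u ≠ k}))
    (fun _ => 0)

/-!
Fix an ordering on which first-fit uses `γ` colors; its coloring `c` is a Grundy coloring. The
clique `C = V ∖ R` carries `|C|` distinct colors, so the `γ - |C|` missing colors occur only on
`R`. Let `Q` be the clique vertices `v` for which some missing color above `c v` does not occur on
an `R`-neighbour of `v`. A vertex of `R` with that missing color has a neighbour of color `c v`,
necessarily in `R`. Hence the missing colors and the colors of `Q`, the `|K| = γ - |C| + |Q|` key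
colors, are distinct colors of `R`, and `|Q| ≤ |R|`.

Ordering first the vertices with a key color by increasing color makes first-fit recolor them by
their rank `1, …, |K|` among the key colors. Every vertex of `C ∖ Q` sees all key colors in that
prefix (missing colors below its own by the Grundy property, those above it by the choice of `Q`,
colors of `Q` because `C` is a clique), so the vertices of `C ∖ Q` receive distinct colors above
`|K|`, and one of them receives at least `|K| + |C ∖ Q| = γ`.
-/

open Finset

section FirstFit

variable {W : Type*} {G : SimpleGraph W}

noncomputable def leastFreeColor (G : SimpleGraph W) (c : W → ℕ) (v : W) : ℕ :=
  sInf {k | 1 ≤ k ∧ ∀ u, G.Adj u v → c u ≠ k}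

theorem leastFreeColor_spec [Finite W] (c : W → ℕ) (v : W) :
    1 ≤ leastFreeColor G c v ∧ ∀ u, G.Adj u v → c u ≠ leastFreeColor G c v := by
  obtain ⟨M, hM⟩ := (Set.finite_range c).bddAbove
  refine Nat.sInf_mem (s := {k | 1 ≤ k ∧ ∀ u, G.Adj u v → c u ≠ k})
    ⟨M + 1, le_add_self, fun u _ hu => ?_⟩
  have := hM (Set.mem_range_self u)
  omega

theorem leastFreeColor_le {c : W → ℕ} {v : W} {k : ℕ} (hk : 1 ≤ k)
    (hfree : ∀ u, G.Adj u v → c u ≠ k) : leastFreeColor G c v ≤ k :=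
  Nat.sInf_le ⟨hk, hfree⟩

theorem exists_adj_of_lt_leastFreeColor {c : W → ℕ} {v : W} {k : ℕ} (hk : 1 ≤ k)
    (hlt : k < leastFreeColor G c v) : ∃ u, G.Adj u v ∧ c u = k := by
  by_contra! h
  exact (leastFreeColor_le hk h).not_gt hlt

theorem lt_leastFreeColor [Finite W] {c : W → ℕ} {v : W} {h : ℕ}
    (hblocked : ∀ j, 1 ≤ j → j ≤ h → ∃ u, G.Adj u v ∧ c u = j) : h < leastFreeColor G c v := by
  by_contra! hle
  obtain ⟨u, hadj, hu⟩ := hblocked _ (leastFreeColor_spec c v).1 hle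
  exact (leastFreeColor_spec c v).2 u hadj hu

structure IsGrundyColoring (G : SimpleGraph W) (c : W → ℕ) : Prop where
  one_le : ∀ x, 1 ≤ c x
  ne_of_adj : ∀ ⦃x y⦄, G.Adj x y → c x ≠ c y
  exists_adj_eq : ∀ x k, 1 ≤ k → k < c x → ∃ u, G.Adj u x ∧ c u = k

theorem IsGrundyColoring.injOn {c : W → ℕ} (hc : IsGrundyColoring G c) {s : Set W}
    (hs : G.IsClique s) : Set.InjOn c s := fun x hx y hy hxy => by
  by_contra hne
  exact hc.ne_of_adj (hs hx hy hne) hxy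

theorem IsGrundyColoring.exists_eq_of_le_sup [Fintype W] {c : W → ℕ}
    (hc : IsGrundyColoring G c) {k : ℕ} (hk : 1 ≤ k) (hkc : k ≤ univ.sup c) : ∃ x, c x = k := by
  have hV : (univ : Finset W).Nonempty := by
    by_contra h
    simp [not_nonempty_iff_eq_empty.mp h] at hkc
    omega
  obtain ⟨x, -, hx⟩ := exists_mem_eq_sup univ hV c
  rcases hkc.lt_or_eq with hlt | heq
  · obtain ⟨u, -, hu⟩ := hc.exists_adj_eq x k hk (hx ▸ hlt)
    exact ⟨u, hu⟩
  · exact ⟨x, (heq.trans hx).symm⟩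

variable [DecidableEq W]

theorem firstFit_concat (l : List W) (v : W) :
    firstFit G (l ++ [v]) =
      Function.update (firstFit G l) v (leastFreeColor G (firstFit G l) v) := by
  simp [firstFit, leastFreeColor]

theorem firstFit_append_apply_of_notMem (l₁ l₂ : List W) {x : W} (hx : x ∉ l₂) :
    firstFit G (l₁ ++ l₂) x = firstFit G l₁ x := by
  induction l₂ using List.reverseRecOn with
  | nil => simp
  | append_singleton l v ih =>
    simp only [List.mem_append, List.mem_singleton, not_or] at hx
    rw [← List.append_assoc, firstFit_concat, Function.update_of_ne hx.2, ih hx.1]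

theorem firstFit_apply_of_notMem {l : List W} {x : W} (hx : x ∉ l) : firstFit G l x = 0 :=
  firstFit_append_apply_of_notMem [] l hx

theorem firstFit_append_cons_self (l₁ l₂ : List W) {x : W} (hx : x ∉ l₂) :
    firstFit G (l₁ ++ x :: l₂) x = leastFreeColor G (firstFit G l₁) x := by
  rw [← List.singleton_append, ← List.append_assoc, firstFit_append_apply_of_notMem _ _ hx,
    firstFit_concat, Function.update_self]

theorem exists_adj_firstFit_eq {l : List W} (hl : l.Nodup) {x : W} (hx : x ∈ l) {k : ℕ}
    (hk : 1 ≤ k) (hlt : k < firstFit G l x) : ∃ u, G.Adj u x ∧ firstFit G l u = k := by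
  induction l using List.reverseRecOn with
  | nil => simp at hx
  | append_singleton l v ih =>
    have hv : v ∉ l := fun hv => (List.nodup_append.mp hl).2.2 v hv v (by simp) rfl
    rw [firstFit_concat] at hlt ⊢
    rcases eq_or_ne x v with rfl | hxv
    · rw [Function.update_self] at hlt
      obtain ⟨u, hadj, hu⟩ := exists_adj_of_lt_leastFreeColor hk hlt
      exact ⟨u, hadj, by rwa [Function.update_of_ne hadj.ne]⟩
    rw [Function.update_of_ne hxv] at hlt
    obtain ⟨u, hadj, hu⟩ := ih (List.nodup_append.mp hl).1 (by simpa [hxv] using hx) hlt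
    have huv : u ≠ v := by
      rintro rfl
      rw [firstFit_apply_of_notMem hv] at hu
      omega
    exact ⟨u, hadj, by rwa [Function.update_of_ne huv]⟩

variable [Finite W]

theorem one_le_firstFit {l : List W} {x : W} (hx : x ∈ l) : 1 ≤ firstFit G l x := by
  induction l using List.reverseRecOn with
  | nil => simp at hx
  | append_singleton l v ih =>
    rw [firstFit_concat]
    rcases eq_or_ne x v with rfl | hxv
    · rw [Function.update_self]
      exact (leastFreeColor_spec _ _).1
    · rw [Function.update_of_ne hxv]
      exact ih (by simpa [hxv] using hx)

theorem firstFit_ne_of_adj {l : List W} {x y : W} (hx : x ∈ l) (hy : y ∈ l) (hadj : G.Adj x y) :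
    firstFit G l x ≠ firstFit G l y := by
  induction l using List.reverseRecOn with
  | nil => simp at hx
  | append_singleton l v ih =>
    rw [firstFit_concat]
    rcases eq_or_ne x v with rfl | hxv
    · rw [Function.update_self, Function.update_of_ne hadj.ne.symm]
      exact ((leastFreeColor_spec _ _).2 y hadj.symm).symm
    rcases eq_or_ne y v with rfl | hyv
    · rw [Function.update_self, Function.update_of_ne hxv]
      exact (leastFreeColor_spec _ _).2 x hadj
    rw [Function.update_of_ne hxv, Function.update_of_ne hyv]
    exact ih (by simpa [hxv] using hx) (by simpa [hyv] using hy)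

theorem isGrundyColoring_firstFit {σ : List W} (hσ : σ.Nodup) (hall : ∀ x, x ∈ σ) :
    IsGrundyColoring G (firstFit G σ) where
  one_le _ := one_le_firstFit (hall _)
  ne_of_adj x y := firstFit_ne_of_adj (hall x) (hall y)
  exists_adj_eq x _ hk hlt := exists_adj_firstFit_eq hσ (hall x) hk hlt

end FirstFit

section Rank

theorem card_filter_lt_mono (K : Finset ℕ) : Monotone fun a => #{x ∈ K | x < a} :=
  fun a b hab => card_le_card fun x hx => by
    simp only [mem_filter] at hx ⊢
    exact ⟨hx.1, by omega⟩

theorem card_filter_lt_lt_card_filter_lt {K : Finset ℕ} {a b : ℕ} (ha : a ∈ K) (hab : a < b) :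
    #{x ∈ K | x < a} < #{x ∈ K | x < b} := by
  refine card_lt_card ⟨fun x hx => ?_, fun h => by simpa using h (mem_filter.mpr ⟨ha, hab⟩)⟩
  simp only [mem_filter] at hx ⊢
  exact ⟨hx.1, by omega⟩

theorem card_filter_lt_lt_card {K : Finset ℕ} {a : ℕ} (ha : a ∈ K) : #{x ∈ K | x < a} < #K :=
  card_lt_card ⟨filter_subset _ K, fun h => by simpa using h ha⟩

theorem image_card_filter_lt_add_one (K : Finset ℕ) :
    K.image (fun a => #{x ∈ K | x < a} + 1) = Icc 1 #K := by
  refine eq_of_subset_of_card_le (fun j hj => ?_) ?_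
  · obtain ⟨a, ha, rfl⟩ := mem_image.mp hj
    have := card_filter_lt_lt_card ha
    simp only [mem_Icc]
    omega
  · rw [Nat.card_Icc, card_image_of_injOn]
    · simp
    intro a ha b hb hab
    by_contra hne
    rcases lt_or_gt_of_ne hne with h | h
    · exact (card_filter_lt_lt_card_filter_lt ha h).ne (by simpa using hab)
    · exact (card_filter_lt_lt_card_filter_lt hb h).ne (by simpa using hab.symm)

end Rank

theorem Finset.exists_list_nodup_pairwise_le {α : Type*} (s : Finset α) (f : α → ℕ) :
    ∃ l : List α, l.Nodup ∧ l.Pairwise (f · ≤ f ·) ∧ ∀ x, x ∈ l ↔ x ∈ s := by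
  have hperm := List.mergeSort_perm s.toList fun a b => decide (f a ≤ f b)
  refine ⟨_, hperm.nodup_iff.mpr s.nodup_toList, ?_, fun x => by rw [hperm.mem_iff, mem_toList]⟩
  simpa using List.pairwise_mergeSort (le := fun a b => decide (f a ≤ f b))
    (fun a b c hab hbc => by simp only [decide_eq_true_eq] at *; omega)
    (fun a b => by simpa using le_total (f a) (f b)) s.toList

section Orderings

variable {W : Type*} [DecidableEq W] [Finite W] {G : SimpleGraph W}

theorem firstFit_eq_of_pairwise (φ : W → ℕ) {l : List W} (hl : l.Nodup)
    (hsort : l.Pairwise (φ · ≤ φ ·)) (hpos : ∀ x ∈ l, 1 ≤ φ x)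
    (hne : ∀ x ∈ l, ∀ y ∈ l, G.Adj x y → φ x ≠ φ y)
    (hex : ∀ x ∈ l, ∀ k, 1 ≤ k → k < φ x → ∃ u ∈ l, G.Adj u x ∧ φ u = k) :
    ∀ x ∈ l, firstFit G l x = φ x := by
  induction l using List.reverseRecOn with
  | nil => simp
  | append_singleton l v ih =>
    have hl' := (List.nodup_append.mp hl).1
    obtain ⟨hsort', -, hle⟩ := List.pairwise_append.mp hsort
    have ih : ∀ x ∈ l, firstFit G l x = φ x := by
      refine ih hl' hsort' (fun x hx => hpos x (by simp [hx]))
        (fun x hx y hy => hne x (by simp [hx]) y (by simp [hy])) fun x hx k hk hlt => ?_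
      obtain ⟨u, hu, hadj, rfl⟩ := hex x (by simp [hx]) k hk hlt
      refine ⟨u, ?_, hadj, rfl⟩
      rcases List.mem_append.mp hu with hu | hu
      · exact hu
      · obtain rfl := List.mem_singleton.mp hu
        have := hle x hx u (by simp)
        omega
    intro x hx
    rw [firstFit_concat]
    rcases eq_or_ne x v with rfl | hxv
    · rw [Function.update_self]
      refine le_antisymm (leastFreeColor_le (hpos x hx) fun u hadj => ?_) ?_
      · by_cases hu : u ∈ l
        · rw [ih u hu]
          exact hne u (by simp [hu]) x hx hadj
        · rw [firstFit_apply_of_notMem hu]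
          have := hpos x hx
          omega
      · by_contra! hlt
        have hfree := leastFreeColor_spec (G := G) (firstFit G l) x
        obtain ⟨u, hu, hadj, hφu⟩ := hex x hx _ hfree.1 hlt
        have hul : u ∈ l := by simpa [hadj.ne] using hu
        exact hfree.2 u hadj (by rw [ih u hul, hφu])
    · rw [Function.update_of_ne hxv]
      exact ih x (by simpa [hxv] using hx)

theorem firstFit_eq_card_filter_lt_add_one {c : W → ℕ} (hc : IsGrundyColoring G c)
    {K : Finset ℕ} (hK : 0 ∉ K) {l : List W} (hl : l.Nodup) (hsort : l.Pairwise (c · ≤ c ·))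
    (hlK : ∀ x, x ∈ l ↔ c x ∈ K) :
    ∀ x ∈ l, firstFit G l x = #{κ ∈ K | κ < c x} + 1 := by
  refine firstFit_eq_of_pairwise _ hl
    (hsort.imp fun h => Nat.add_le_add_right (card_filter_lt_mono K h) 1)
    (fun _ _ => le_add_self) (fun x hx y hy hadj => ?_) fun x hx k hk hlt => ?_
  · rcases lt_or_gt_of_ne (hc.ne_of_adj hadj) with h | h
    · have := card_filter_lt_lt_card_filter_lt ((hlK x).1 hx) h
      omega
    · have := card_filter_lt_lt_card_filter_lt ((hlK y).1 hy) h
      omega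
  have := card_filter_lt_lt_card ((hlK x).1 hx)
  obtain ⟨κ, hκ, rfl⟩ : ∃ κ ∈ K, #{y ∈ K | y < κ} + 1 = k := by
    rw [← mem_image, image_card_filter_lt_add_one, mem_Icc]
    omega
  have hκx : κ < c x := lt_of_not_ge fun h => by
    have : #{y ∈ K | y < c x} ≤ #{y ∈ K | y < κ} := card_filter_lt_mono K h
    omega
  obtain ⟨u, hadj, rfl⟩ :=
    hc.exists_adj_eq x κ (Nat.pos_of_ne_zero (ne_of_mem_of_not_mem hκ hK)) hκx
  exact ⟨u, (hlK u).2 hκ, hadj, rfl⟩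

theorem exists_list_firstFit_eq_card_filter_lt_add_one {c : W → ℕ} (hc : IsGrundyColoring G c)
    {K : Finset ℕ} (hK : 0 ∉ K) {s : Finset W} (hs : ∀ x, c x ∈ K → x ∈ s) :
    ∃ l : List W, l.Nodup ∧ (∀ x, x ∈ l ↔ x ∈ s) ∧
      ∀ x, c x ∈ K → firstFit G l x = #{κ ∈ K | κ < c x} + 1 := by
  obtain ⟨l, hl, hsort, hlK⟩ := Finset.exists_list_nodup_pairwise_le {x ∈ s | c x ∈ K} c
  have hlK : ∀ x, x ∈ l ↔ c x ∈ K := fun x => by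
    rw [hlK, mem_filter]
    exact ⟨And.right, fun h => ⟨hs x h, h⟩⟩
  have hrest : ∀ x, x ∈ {x ∈ s | c x ∉ K}.toList ↔ x ∈ s ∧ c x ∉ K := by simp
  refine ⟨l ++ {x ∈ s | c x ∉ K}.toList,
    hl.append (nodup_toList _) fun x h₁ h₂ => ((hrest x).1 h₂).2 ((hlK x).1 h₁),
    fun x => ?_, fun x hx => ?_⟩
  · by_cases hx : c x ∈ K <;> simp [hlK, hrest, hx, hs]
  · rw [firstFit_append_apply_of_notMem _ _ fun h => ((hrest x).1 h).2 hx]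
    exact firstFit_eq_card_filter_lt_add_one hc hK hl hsort hlK x ((hlK x).2 hx)

theorem lt_firstFit_append {l₁ l₂ : List W} (hnd : (l₁ ++ l₂).Nodup) {v : W} (hv : v ∈ l₂)
    {h : ℕ} (hblocked : ∀ j, 1 ≤ j → j ≤ h → ∃ u ∈ l₁, G.Adj u v ∧ firstFit G l₁ u = j) :
    h < firstFit G (l₁ ++ l₂) v := by
  obtain ⟨a, b, rfl⟩ := List.append_of_mem hv
  rw [← List.append_assoc] at hnd ⊢
  obtain ⟨hnd₁, hnd₂, -⟩ := List.nodup_append.mp hnd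
  rw [firstFit_append_cons_self _ _ (List.nodup_cons.mp hnd₂).1]
  refine lt_leastFreeColor fun j hj hjh => ?_
  obtain ⟨u, hu, hadj, hcu⟩ := hblocked j hj hjh
  have hua : u ∉ a := fun hua => (List.nodup_append.mp hnd₁).2.2 u hu u hua rfl
  exact ⟨u, hadj, by rw [firstFit_append_apply_of_notMem _ _ hua, hcu]⟩

end Orderings

section CliqueModulator

variable {G : SimpleGraph V}

theorem add_length_le_sup_firstFit {l₁ l₂ : List V} (hnd : (l₁ ++ l₂).Nodup) (hne : l₂ ≠ [])
    (hclique : G.IsClique {x | x ∈ l₂}) {h : ℕ}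
    (hblocked : ∀ v ∈ l₂, ∀ j, 1 ≤ j → j ≤ h → ∃ u ∈ l₁, G.Adj u v ∧ firstFit G l₁ u = j) :
    h + l₂.length ≤ univ.sup (firstFit G (l₁ ++ l₂)) := by
  set f := firstFit G (l₁ ++ l₂)
  have hinj : Set.InjOn f ↑l₂.toFinset := fun x hx y hy hxy => by
    simp only [List.coe_toFinset] at hx hy
    by_contra hxy'
    exact firstFit_ne_of_adj (List.mem_append_right _ hx) (List.mem_append_right _ hy)
      (hclique hx hy hxy') hxy
  have hcard : #(l₂.toFinset.image f) = l₂.length := by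
    rw [card_image_of_injOn hinj, List.toFinset_card_of_nodup (List.nodup_append.mp hnd).2.1]
  have hsub : l₂.toFinset.image f ⊆ Icc (h + 1) (univ.sup f) := fun a ha => by
    obtain ⟨v, hv, rfl⟩ := mem_image.mp ha
    have hv := List.mem_toFinset.mp hv
    exact mem_Icc.mpr ⟨lt_firstFit_append hnd hv (hblocked v hv), le_sup (mem_univ v)⟩
  have := card_le_card hsub
  have := List.length_pos_of_ne_nil hne
  rw [Nat.card_Icc, hcard] at *
  omega

variable {R : Finset V} {c : V → ℕ}

def missingColors (R : Finset V) (c : V → ℕ) : Finset ℕ :=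
  Icc 1 (univ.sup c) \ (univ \ R).image c

open Classical in
noncomputable def exceptionalSet (G : SimpleGraph V) (R : Finset V) (c : V → ℕ) : Finset V :=
  {v ∈ univ \ R | ∃ s ∈ missingColors R c, c v < s ∧ ∀ w ∈ R, c w = s → ¬G.Adj w v}

theorem mem_exceptionalSet {v : V} :
    v ∈ exceptionalSet G R c ↔
      v ∈ univ \ R ∧ ∃ s ∈ missingColors R c, c v < s ∧ ∀ w ∈ R, c w = s → ¬G.Adj w v := by
  classical
  rw [exceptionalSet, mem_filter]

theorem exceptionalSet_subset : exceptionalSet G R c ⊆ univ \ R :=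
  fun _ h => (mem_exceptionalSet.mp h).1

noncomputable def keyColors (G : SimpleGraph V) (R : Finset V) (c : V → ℕ) : Finset ℕ :=
  missingColors R c ∪ (exceptionalSet G R c).image c

theorem card_add_card_missingColors (hc : IsGrundyColoring G c)
    (hclique : G.IsClique ↑(univ \ R)) : #(univ \ R) + #(missingColors R c) = univ.sup c := by
  have hsub : (univ \ R).image c ⊆ Icc 1 (univ.sup c) := fun _ h => by
    obtain ⟨x, -, rfl⟩ := mem_image.mp h
    exact mem_Icc.mpr ⟨hc.one_le x, le_sup (mem_univ x)⟩
  have hcard : #((univ \ R).image c) = #(univ \ R) := card_image_of_injOn (hc.injOn hclique)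
  have := card_le_card hsub
  rw [missingColors, card_sdiff_of_subset hsub, Nat.card_Icc] at *
  omega

theorem exists_mem_eq_of_mem_missingColors (hc : IsGrundyColoring G c) {s : ℕ}
    (hs : s ∈ missingColors R c) : ∃ w ∈ R, c w = s := by
  obtain ⟨hs, hsC⟩ := mem_sdiff.mp hs
  obtain ⟨w, rfl⟩ := hc.exists_eq_of_le_sup (mem_Icc.mp hs).1 (mem_Icc.mp hs).2
  refine ⟨w, ?_, rfl⟩
  by_contra hw
  exact hsC (mem_image_of_mem c (by simpa using hw))

theorem keyColors_subset_image (hc : IsGrundyColoring G c) (hclique : G.IsClique ↑(univ \ R)) :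
    keyColors G R c ⊆ R.image c := by
  intro κ hκ
  rcases mem_union.mp hκ with hκ | hκ
  · obtain ⟨w, hw, rfl⟩ := exists_mem_eq_of_mem_missingColors hc hκ
    exact mem_image_of_mem c hw
  obtain ⟨v, hv, rfl⟩ := mem_image.mp hκ
  obtain ⟨hvC, s, hs, hvs, hunseen⟩ := mem_exceptionalSet.mp hv
  obtain ⟨w, hw, rfl⟩ := exists_mem_eq_of_mem_missingColors hc hs
  obtain ⟨u, hadj, hu⟩ := hc.exists_adj_eq w (c v) (hc.one_le v) hvs
  refine mem_image.mpr ⟨u, ?_, hu⟩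
  by_contra huR
  obtain rfl : u = v := hc.injOn hclique (by simpa using huR) hvC hu
  exact hunseen w hw rfl hadj.symm

theorem card_keyColors (hc : IsGrundyColoring G c) (hclique : G.IsClique ↑(univ \ R)) :
    #(keyColors G R c) = #(missingColors R c) + #(exceptionalSet G R c) := by
  have hdisj : Disjoint (missingColors R c) ((exceptionalSet G R c).image c) :=
    disjoint_left.mpr fun _ h₁ h₂ => (mem_sdiff.mp h₁).2 
      (image_subset_image exceptionalSet_subset h₂)
  rw [keyColors, card_union_of_disjoint hdisj,
    card_image_of_injOn ((hc.injOn hclique).mono (coe_subset.mpr exceptionalSet_subset))]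

theorem card_exceptionalSet_le (hc : IsGrundyColoring G c) (hclique : G.IsClique ↑(univ \ R)) :
    #(exceptionalSet G R c) ≤ #R := by
  have := card_le_card (keyColors_subset_image hc hclique)
  have := card_image_le (s := R) (f := c)
  rw [card_keyColors hc hclique] at *
  omega

theorem mem_of_mem_keyColors (hc : IsGrundyColoring G c) (hclique : G.IsClique ↑(univ \ R))
    {x : V} (hx : c x ∈ keyColors G R c) : x ∈ R ∪ exceptionalSet G R c := by
  by_contra hxP
  obtain ⟨hxR, hxQ⟩ := not_or.mp (mem_union.not.mp hxP)
  have hxC : x ∈ univ \ R := by simpa using hxR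
  rcases mem_union.mp hx with hx | hx
  · exact (mem_sdiff.mp hx).2 (mem_image_of_mem c hxC)
  · obtain ⟨q, hq, hqx⟩ := mem_image.mp hx
    exact hxQ (hc.injOn hclique (exceptionalSet_subset hq) hxC hqx ▸ hq)

theorem exists_adj_of_mem_keyColors (hc : IsGrundyColoring G c)
    (hclique : G.IsClique ↑(univ \ R)) {v : V} (hv : v ∉ R ∪ exceptionalSet G R c) {κ : ℕ}
    (hκ : κ ∈ keyColors G R c) : ∃ u, G.Adj u v ∧ c u = κ := by
  obtain ⟨hvR, hvQ⟩ := not_or.mp (mem_union.not.mp hv)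
  have hvC : v ∈ univ \ R := by simpa using hvR
  rcases mem_union.mp hκ with hκ | hκ
  · have hne : c v ≠ κ := fun h => (mem_sdiff.mp hκ).2 (h ▸ mem_image_of_mem c hvC)
    rcases lt_or_gt_of_ne hne with hlt | hlt
    · by_contra! hno
      exact hvQ (mem_exceptionalSet.mpr ⟨hvC, κ, hκ, hlt, fun w _ hwκ hadj => hno w hadj hwκ⟩)
    · exact hc.exists_adj_eq v κ (mem_Icc.mp (mem_sdiff.mp hκ).1).1 hlt
  · obtain ⟨q, hq, rfl⟩ := mem_image.mp hκ
    exact ⟨q, hclique (exceptionalSet_subset hq) hvC (by rintro rfl; exact hvQ hq), rfl⟩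

theorem card_keyColors_add_card_compl (hc : IsGrundyColoring G c)
    (hclique : G.IsClique ↑(univ \ R)) :
    #(keyColors G R c) + #(R ∪ exceptionalSet G R c)ᶜ = univ.sup c := by
  have hdisj : Disjoint R (exceptionalSet G R c) :=
    disjoint_left.mpr fun _ hR hQ => (mem_sdiff.mp (exceptionalSet_subset hQ)).2 hR
  have hQC : #(exceptionalSet G R c) ≤ #(univ \ R) := card_le_card (exceptionalSet_subset)
  rw [card_compl, card_union_of_disjoint hdisj, card_keyColors hc hclique,
    ← card_add_card_missingColors hc hclique]
  rw [card_univ_sdiff] at *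
  omega

theorem exists_prefix_le_sup_firstFit (hc : IsGrundyColoring G c)
    (hclique : G.IsClique ↑(univ \ R)) {σ₂ : List V} (hσ₂ : σ₂.Nodup)
    (hmem₂ : ∀ x, x ∈ σ₂ ↔ x ∉ R ∪ exceptionalSet G R c) (hne : σ₂ ≠ []) :
    ∃ σ₁ : List V, σ₁.Nodup ∧ (∀ x, x ∈ σ₁ ↔ x ∈ R ∪ exceptionalSet G R c) ∧
      univ.sup c ≤ univ.sup (firstFit G (σ₁ ++ σ₂)) := by
  set K := keyColors G R c
  have hK0 : 0 ∉ K := fun h => by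
    obtain ⟨w, -, hw⟩ := mem_image.mp (keyColors_subset_image hc hclique h)
    exact absurd (hc.one_le w) (by omega)
  obtain ⟨σ₁, hσ₁, hmem₁, hrank⟩ := exists_list_firstFit_eq_card_filter_lt_add_one hc hK0
    fun x hx => mem_of_mem_keyColors hc hclique hx
  refine ⟨σ₁, hσ₁, hmem₁, ?_⟩
  have hlen : σ₂.length = #(R ∪ exceptionalSet G R c)ᶜ := by
    rw [← List.toFinset_card_of_nodup hσ₂]
    congr 1
    ext x
    simp [hmem₂]
  have hσ₂C : G.IsClique {x | x ∈ σ₂} := hclique.subset fun x hx => by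
    simpa using (not_or.mp (mem_union.not.mp ((hmem₂ x).1 hx))).1
  rw [← card_keyColors_add_card_compl hc hclique, ← hlen]
  refine add_length_le_sup_firstFit
    (hσ₁.append hσ₂ fun x h₁ h₂ => (hmem₂ x).1 h₂ ((hmem₁ x).1 h₁)) hne hσ₂C
    fun v hv j hj hjK => ?_
  obtain ⟨κ, hκ, rfl⟩ : ∃ κ ∈ K, #{x ∈ K | x < κ} + 1 = j := by
    rw [← mem_image, image_card_filter_lt_add_one]
    exact mem_Icc.mpr ⟨hj, hjK⟩
  obtain ⟨u, hadj, rfl⟩ := exists_adj_of_mem_keyColors hc hclique ((hmem₂ v).1 hv) hκ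
  exact ⟨u, (hmem₁ u).2 (mem_of_mem_keyColors hc hclique hκ), hadj, hrank u hκ⟩

end CliqueModulator

theorem stmt7 (G : SimpleGraph V) (R : Finset V) (r : ℕ) (hr : R.card ≤ r)
    (hclique : G.IsClique ↑(Finset.univ \ R)) (γ : ℕ)
    (hγ : IsGreatest {n | ∃ σ : List V, σ.Nodup ∧ (∀ x, x ∈ σ) ∧
            Finset.univ.sup (firstFit G σ) = n} γ) :
    ∃ Q : Finset V, Q ⊆ Finset.univ \ R ∧ Q.card ≤ r ∧
      ∀ σ2 : List V, σ2.Nodup → (∀ x, x ∈ σ2 ↔ x ∉ R ∪ Q) →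
        ∃ σ1 : List V, σ1.Nodup ∧ (∀ x, x ∈ σ1 ↔ x ∈ R ∪ Q) ∧
          Finset.univ.sup (firstFit G (σ1 ++ σ2)) = γ := by
  obtain ⟨⟨σ, hσ, hσall, rfl⟩, hmax⟩ := hγ
  have hc : IsGrundyColoring G (firstFit G σ) := isGrundyColoring_firstFit hσ hσall
  refine ⟨exceptionalSet G R (firstFit G σ), exceptionalSet_subset,
    (card_exceptionalSet_le hc hclique).trans hr, fun σ₂ hσ₂ hmem₂ => ?_⟩
  rcases eq_or_ne σ₂ [] with rfl | hne
  · refine ⟨σ, hσ, fun x => iff_of_true (hσall x) ?_, by rw [List.append_nil]⟩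
    exact not_not.mp ((hmem₂ x).not.mp List.not_mem_nil)
  obtain ⟨σ₁, hσ₁, hmem₁, hle⟩ := exists_prefix_le_sup_firstFit hc hclique hσ₂ hmem₂ hne
  refine ⟨σ₁, hσ₁, hmem₁, le_antisymm (hmax ⟨_, ?_, fun x => ?_, rfl⟩) hle⟩
  · exact hσ₁.append hσ₂ fun x h₁ h₂ => (hmem₂ x).1 h₂ ((hmem₁ x).1 h₁)
  · by_cases hx : x ∈ R ∪ exceptionalSet G R (firstFit G σ) <;> simp [hmem₁, hmem₂, hx]
end

section
/- Let G be a graph with clique modulator R of size r, S = V(G)∖R, and for each equivalence class E_i of the relation u ∼ v ⟺ N[u] = N[v] on S, let F_i ⊆ E_i be an arbitrary subset of size min{r, |E_i|}, and F = ⋃_i F_i. Then the Grundy number of G equals the Grundy number of G[R ∪ F] plus |V(G) ∖ (R ∪ F)|. -/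
variable {V : Type*} [Fintype V] [DecidableEq V]

/-!
Adding a vertex `z ∉ R ∪ F` to a set `X ⊇ R ∪ F` raises the Grundy number by exactly one.
It cannot raise it by more: deleting the class of `z` from an optimal coloring and re-inserting
the remaining vertices first-fit loses at most that one class. It does raise it, because `z` has
at least `r` twins in `F`, which forces every class of every Grundy coloring of `X` to contain a
neighbour of `z`; so `{z}` can be appended as a last class.
-/

theorem List.Pairwise.rel_or_rel_of_ne {α : Type*} {R : α → α → Prop} {l : List α}
    (h : l.Pairwise R) {a b : α} (ha : a ∈ l) (hb : b ∈ l) (hab : a ≠ b) : R a b ∨ R b a := by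
  obtain ⟨i, rfl⟩ := List.mem_iff_get.mp ha
  obtain ⟨j, rfl⟩ := List.mem_iff_get.mp hb
  rcases lt_trichotomy i j with hij | rfl | hji
  · exact .inl (List.pairwise_iff_get.mp h i j hij)
  · exact absurd rfl hab
  · exact .inr (List.pairwise_iff_get.mp h j i hji)

theorem le_card_of_card_eq_min {α : Type*} {s t : Finset α} {z : α} {r : ℕ}
    (hst : s ⊆ t) (hzt : z ∈ t) (hzs : z ∉ s) (h : s.card = min r t.card) : r ≤ s.card := by
  have := Finset.card_lt_card (Finset.ssubset_iff_subset_ne.mpr ⟨hst, fun h => hzs (h ▸ hzt)⟩)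
  omega

namespace GrundyColoringOn

section

omit [Fintype V] [DecidableEq V]

variable {G : SimpleGraph V} {X : Finset V} {C : List (Finset V)}

theorem iff_pairwise : GrundyColoringOn G X C ↔
    (∀ A ∈ C, A.Nonempty) ∧ (∀ v, v ∈ X ↔ ∃ A ∈ C, v ∈ A) ∧
      (∀ A ∈ C, ∀ u ∈ A, ∀ w ∈ A, ¬ G.Adj u w) ∧
      C.Pairwise (fun B A => Disjoint B A ∧ ∀ v ∈ A, ∃ u ∈ B, G.Adj u v) := by
  have hdom : (∀ i j : ℕ, ∀ hi : i < C.length, ∀ hj : j < C.length, j < i →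
      ∀ v ∈ C.get ⟨i, hi⟩, ∃ u ∈ C.get ⟨j, hj⟩, G.Adj u v) ↔
      C.Pairwise (fun B A => ∀ v ∈ A, ∃ u ∈ B, G.Adj u v) := by
    rw [List.pairwise_iff_get]
    exact ⟨fun h j i hji => h i j i.2 j.2 hji, fun h i j hi hj hji => h ⟨j, hj⟩ ⟨i, hi⟩ hji⟩
  rw [GrundyColoringOn, hdom, List.pairwise_and_iff]
  tauto

theorem nil_iff : GrundyColoringOn G X [] ↔ X = ∅ := by
  simp [iff_pairwise, Finset.eq_empty_iff_forall_notMem]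

theorem nonempty_of_mem (h : GrundyColoringOn G X C) {A : Finset V} (hA : A ∈ C) : A.Nonempty :=
  h.1 A hA

theorem exists_mem_of_mem (h : GrundyColoringOn G X C) {v : V} (hv : v ∈ X) : ∃ A ∈ C, v ∈ A :=
  (h.2.2.1 v).mp hv

theorem subset_of_mem (h : GrundyColoringOn G X C) {A : Finset V} (hA : A ∈ C) : A ⊆ X :=
  fun _ hv => (h.2.2.1 _).mpr ⟨A, hA, hv⟩

theorem not_adj (h : GrundyColoringOn G X C) {A : Finset V} (hA : A ∈ C) {u w : V} (hu : u ∈ A)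
    (hw : w ∈ A) : ¬ G.Adj u w :=
  h.2.2.2.1 A hA u hu w hw

theorem eq_of_mem_of_mem (h : GrundyColoringOn G X C) {A B : Finset V} (hA : A ∈ C) (hB : B ∈ C)
    {v : V} (hvA : v ∈ A) (hvB : v ∈ B) : A = B := by
  by_contra hAB
  exact Finset.disjoint_left.mp (h.2.1.forall hA hB hAB) hvA hvB

theorem dominates_or_dominated (h : GrundyColoringOn G X C) {A B : Finset V} (hA : A ∈ C)
    (hB : B ∈ C) (hAB : A ≠ B) :
    (∀ v ∈ B, ∃ u ∈ A, G.Adj u v) ∨ (∀ v ∈ A, ∃ u ∈ B, G.Adj u v) :=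
  ((iff_pairwise.mp h).2.2.2.rel_or_rel_of_ne hA hB hAB).imp And.right And.right

end

section

omit [Fintype V]

variable {G : SimpleGraph V} {X : Finset V} {A : Finset V} {C : List (Finset V)}

theorem cons_iff : GrundyColoringOn G X (A :: C) ↔
    A ⊆ X ∧ A.Nonempty ∧ (∀ u ∈ A, ∀ w ∈ A, ¬ G.Adj u w) ∧
      (∀ w ∈ X \ A, ∃ u ∈ A, G.Adj u w) ∧ GrundyColoringOn G (X \ A) C := by
  simp only [iff_pairwise, List.pairwise_cons, List.forall_mem_cons, List.exists_mem_cons_iff,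
    Finset.mem_sdiff, forall_and]
  constructor
  · rintro ⟨⟨hA, hC⟩, hcov, ⟨hAind, hCind⟩, ⟨hdisj, hdom⟩, hpw⟩
    have hAX : A ⊆ X := fun v hv => (hcov v).mpr (.inl hv)
    refine ⟨hAX, hA, hAind, fun w ⟨hwX, hwA⟩ => ?_, hC, fun v => ⟨fun ⟨hvX, hvA⟩ => ?_, ?_⟩,
      hCind, hpw⟩
    · obtain hwA' | ⟨B, hB, hwB⟩ := (hcov w).mp hwX
      · exact absurd hwA' hwA
      · exact hdom B hB w hwB
    · exact ((hcov v).mp hvX).resolve_left hvA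
    · rintro ⟨B, hB, hvB⟩
      exact ⟨(hcov v).mpr (.inr ⟨B, hB, hvB⟩), Finset.disjoint_right.mp (hdisj B hB) hvB⟩
  · rintro ⟨hAX, hA, hAind, hdom, hC, hcov, hCind, hpw⟩
    have hCX : ∀ B ∈ C, ∀ v ∈ B, v ∈ X ∧ v ∉ A := fun B hB v hv => (hcov v).mpr ⟨B, hB, hv⟩
    refine ⟨⟨hA, hC⟩, fun v => ⟨fun hvX => ?_, ?_⟩, ⟨hAind, hCind⟩,
      ⟨fun B hB => Finset.disjoint_right.mpr fun v hv => (hCX B hB v hv).2,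
        fun B hB v hv => hdom v (hCX B hB v hv)⟩, hpw⟩
    · by_cases hvA : v ∈ A
      · exact .inl hvA
      · exact .inr ((hcov v).mp ⟨hvX, hvA⟩)
    · rintro (hvA | ⟨B, hB, hvB⟩)
      · exact hAX hvA
      · exact (hCX B hB v hvB).1

theorem singleton (v : V) : GrundyColoringOn G {v} [{v}] :=
  cons_iff.mpr ⟨subset_rfl, Finset.singleton_nonempty v, by simp, by simp,
    nil_iff.mpr (Finset.sdiff_self _)⟩

theorem length_le_card (h : GrundyColoringOn G X C) : C.length ≤ X.card := by
  induction C generalizing X with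
  | nil => simp
  | cons A C ih =>
    obtain ⟨hAX, hA, -, -, hC⟩ := cons_iff.mp h
    have := Finset.card_lt_card (Finset.sdiff_ssubset hAX hA)
    have := ih hC
    simp only [List.length_cons]
    omega

theorem exists_insert (h : GrundyColoringOn G X C) {v : V} (hv : v ∉ X) :
    ∃ C', GrundyColoringOn G (insert v X) C' ∧ C.length ≤ C'.length := by
  induction C generalizing X with
  | nil => exact ⟨[{v}], by simpa [nil_iff.mp h] using singleton v, by simp⟩
  | cons A C ih =>
    obtain ⟨hAX, hA, hAind, hdom, hC⟩ := cons_iff.mp h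
    have hvA : v ∉ A := fun hvA => hv (hAX hvA)
    by_cases hvadj : ∃ u ∈ A, G.Adj u v
    · obtain ⟨C', hC', hlen⟩ := ih hC fun hv' => hv (Finset.mem_sdiff.mp hv').1
      rw [← Finset.insert_sdiff_of_notMem _ hvA] at hC'
      refine ⟨A :: C', cons_iff.mpr ⟨hAX.trans (Finset.subset_insert v X), hA, hAind, ?_, hC'⟩,
        by simpa using hlen⟩
      rw [Finset.insert_sdiff_of_notMem _ hvA, Finset.forall_mem_insert]
      exact ⟨hvadj, hdom⟩
    · push Not at hvadj
      have hsdiff : insert v X \ insert v A = X \ A := by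
        rw [Finset.insert_sdiff_insert, Finset.sdiff_insert_of_notMem hv]
      refine ⟨insert v A :: C, cons_iff.mpr ⟨Finset.insert_subset_insert v hAX,
        Finset.insert_nonempty v A, ?_, hsdiff ▸ fun w hw => ?_, hsdiff ▸ hC⟩, le_rfl⟩
      · simp only [Finset.mem_insert]
        rintro u (rfl | hu) w (rfl | hw)
        · exact G.irrefl
        · exact fun hadj => hvadj w hw hadj.symm
        · exact hvadj u hu
        · exact hAind u hu w hw
      · obtain ⟨u, hu, hadj⟩ := hdom w hw
        exact ⟨u, Finset.mem_insert_of_mem hu, hadj⟩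

theorem exists_of_subset (h : GrundyColoringOn G X C) {Y : Finset V} (hXY : X ⊆ Y) :
    ∃ C', GrundyColoringOn G Y C' ∧ C.length ≤ C'.length := by
  suffices ∀ D : Finset V, ∃ C', GrundyColoringOn G (X ∪ D) C' ∧ C.length ≤ C'.length by
    simpa [Finset.union_eq_right.mpr hXY] using this Y
  intro D
  induction D using Finset.induction_on with
  | empty => exact ⟨C, by simpa using h, le_rfl⟩
  | insert v D _ ih =>
    obtain ⟨C', hC', hlen⟩ := ih
    rw [Finset.union_insert]
    by_cases hv : v ∈ X ∪ D
    · exact ⟨C', by rwa [Finset.insert_eq_of_mem hv], hlen⟩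
    · obtain ⟨C'', hC'', hlen'⟩ := hC'.exists_insert hv
      exact ⟨C'', hC'', hlen.trans hlen'⟩

theorem erase_class {C₁ C₂ : List (Finset V)} (h : GrundyColoringOn G X (C₁ ++ A :: C₂)) :
    GrundyColoringOn G (X \ A) (C₁ ++ C₂) := by
  induction C₁ generalizing X with
  | nil => exact (cons_iff.mp h).2.2.2.2
  | cons B C₁ ih =>
    obtain ⟨hBX, hB, hBind, hdom, hC⟩ := cons_iff.mp h
    have hAXB : A ⊆ X \ B := hC.subset_of_mem (by simp)
    have hBA : B ⊆ X \ A := fun v hv =>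
      Finset.mem_sdiff.mpr ⟨hBX hv, fun hvA => (Finset.mem_sdiff.mp (hAXB hvA)).2 hv⟩
    refine cons_iff.mpr ⟨hBA, hB, hBind, fun w hw => hdom w ?_, ?_⟩
    · exact Finset.sdiff_subset_sdiff Finset.sdiff_subset le_rfl hw
    · rw [sdiff_sdiff_comm]
      exact ih hC

theorem append_singleton (h : GrundyColoringOn G X C) {z : V} (hz : z ∉ X)
    (hadj : ∀ A ∈ C, ∃ u ∈ A, G.Adj u z) : GrundyColoringOn G (insert z X) (C ++ [{z}]) := by
  induction C generalizing X with
  | nil => simpa [nil_iff.mp h] using singleton z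
  | cons A C ih =>
    obtain ⟨hAX, hA, hAind, hdom, hC⟩ := cons_iff.mp h
    have hzA : z ∉ A := fun hzA => hz (hAX hzA)
    have hC' := ih hC (fun hz' => hz (Finset.mem_sdiff.mp hz').1)
      fun B hB => hadj B (List.mem_cons_of_mem A hB)
    rw [← Finset.insert_sdiff_of_notMem _ hzA] at hC'
    refine cons_iff.mpr ⟨hAX.trans (Finset.subset_insert z X), hA, hAind, ?_, hC'⟩
    rw [Finset.insert_sdiff_of_notMem _ hzA, Finset.forall_mem_insert]
    exact ⟨hadj A List.mem_cons_self, hdom⟩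

/-- If a class `A` had no neighbour of `z`, then `A ⊆ R`, every `u ∈ T` would sit in a class `B`
dominating `A`, and a neighbour in `B` of a fixed `x ∈ A` must lie in `R \ {x}`; as `T` is a
clique these classes are distinct, so `T` injects into `R \ {x}`. -/
theorem exists_adj_of_card_le {R T : Finset V} (h : GrundyColoringOn G X C)
    (hclique : G.IsClique (↑R : Set V)ᶜ)
    {z : V} (hzR : z ∉ R) (hzX : z ∉ X) (hTX : T ⊆ X) (hTR : Disjoint T R)
    (hT : ∀ u ∈ T, ∀ w, G.Adj w u → w = z ∨ G.Adj w z) (hRT : R.card ≤ T.card)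
    (hA : A ∈ C) : ∃ u ∈ A, G.Adj u z := by
  by_contra! hAz
  have hAX : A ⊆ X := h.subset_of_mem hA
  have hAR : A ⊆ R := fun y hy => by
    by_contra hyR
    exact hAz y hy (hclique hyR hzR fun hyz => hzX (hyz ▸ hAX hy))
  have hTA : ∀ u ∈ T, ∀ y ∈ A, ¬ G.Adj y u := fun u hu y hy hyu =>
    (hT u hu y hyu).elim (fun hyz => hzX (hyz ▸ hAX hy)) (hAz y hy)
  obtain ⟨x, hx⟩ := h.nonempty_of_mem hA
  have hclass : ∀ u ∈ T, ∃ y ∈ R.erase x, ∃ B ∈ C, u ∈ B ∧ y ∈ B := by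
    intro u hu
    obtain ⟨B, hB, huB⟩ := h.exists_mem_of_mem (hTX hu)
    have huR : u ∉ R := Finset.disjoint_left.mp hTR hu
    have hBA : B ≠ A := by
      rintro rfl
      exact huR (hAR huB)
    have hdom := (h.dominates_or_dominated hB hA hBA).resolve_right fun hdom =>
      let ⟨y, hy, hyu⟩ := hdom u huB
      hTA u hu y hy hyu
    obtain ⟨y, hyB, hyx⟩ := hdom x hx
    have hyR : y ∈ R := by
      by_contra hyR
      by_cases hyu : y = u
      · exact hTA u hu x hx (hyu ▸ hyx.symm)
      · exact h.not_adj hB hyB huB (hclique hyR huR hyu)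
    have hyx' : y ≠ x := by
      rintro rfl
      exact hBA (h.eq_of_mem_of_mem hB hA hyB hx)
    exact ⟨y, Finset.mem_erase.mpr ⟨hyx', hyR⟩, B, hB, huB, hyB⟩
  choose! g hgR B hB huB hgB using hclass
  have hinj : Set.InjOn g T := by
    intro u hu u' hu' hgu
    have hBB' := h.eq_of_mem_of_mem (hB u hu) (hB u' hu') (hgB u hu) (hgu ▸ hgB u' hu')
    by_contra hne
    have huR : u ∉ R := Finset.disjoint_left.mp hTR hu
    have hu'R : u' ∉ R := Finset.disjoint_left.mp hTR hu'
    exact h.not_adj (hB u hu) (huB u hu) (hBB' ▸ huB u' hu') (hclique huR hu'R hne)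
  have := Finset.card_le_card_of_injOn g hgR hinj
  rw [Finset.card_erase_of_mem (hAR hx)] at this
  have := Finset.card_pos.mpr ⟨x, hAR hx⟩
  omega

end

end GrundyColoringOn

section

omit [Fintype V]

variable {G : SimpleGraph V} {X Y : Finset V}

variable (G X) in
noncomputable def grundyNumber : ℕ := sSup (grundySet G X)

variable (G X) in
theorem isGreatest_grundyNumber : IsGreatest (grundySet G X) (grundyNumber G X) := by
  obtain ⟨C, hC, -⟩ := (GrundyColoringOn.nil_iff.mpr rfl : GrundyColoringOn G ∅ []).exists_of_subset
    X.empty_subset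
  have hbdd : BddAbove (grundySet G X) := ⟨X.card, by
    rintro _ ⟨C, hC, rfl⟩
    exact hC.length_le_card⟩
  exact ⟨Nat.sSup_mem ⟨_, C, hC, rfl⟩ hbdd, fun _ hn => le_csSup hbdd hn⟩

theorem GrundyColoringOn.length_le_grundyNumber {C : List (Finset V)}
    (h : GrundyColoringOn G X C) : C.length ≤ grundyNumber G X :=
  (isGreatest_grundyNumber G X).2 ⟨C, h, rfl⟩

theorem grundyNumber_mono (hXY : X ⊆ Y) : grundyNumber G X ≤ grundyNumber G Y := by
  obtain ⟨C, hC, hlen⟩ := (isGreatest_grundyNumber G X).1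
  obtain ⟨C', hC', hle⟩ := hC.exists_of_subset hXY
  exact hlen ▸ hle.trans hC'.length_le_grundyNumber

theorem grundyNumber_insert_le (z : V) : grundyNumber G (insert z X) ≤ grundyNumber G X + 1 := by
  obtain ⟨C, hC, hlen⟩ := (isGreatest_grundyNumber G (insert z X)).1
  obtain ⟨A, hAC, hzA⟩ := hC.exists_mem_of_mem (Finset.mem_insert_self z X)
  obtain ⟨C₁, C₂, rfl⟩ := List.append_of_mem hAC
  have hsub : insert z X \ A ⊆ X := by
    rw [Finset.insert_sdiff_of_mem _ hzA]
    exact Finset.sdiff_subset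
  have := hC.erase_class.length_le_grundyNumber.trans (grundyNumber_mono hsub)
  simp only [List.length_append, List.length_cons] at this hlen
  omega

theorem grundyNumber_insert {z : V} (hz : z ∉ X)
    (hadj : ∀ C, GrundyColoringOn G X C → ∀ A ∈ C, ∃ u ∈ A, G.Adj u z) :
    grundyNumber G (insert z X) = grundyNumber G X + 1 := by
  obtain ⟨C, hC, hlen⟩ := (isGreatest_grundyNumber G X).1
  have := (hC.append_singleton hz (hadj C hC)).length_le_grundyNumber
  simp only [List.length_append, List.length_singleton, hlen] at this
  exact (grundyNumber_insert_le z).antisymm this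

theorem grundyNumber_union_eq_add_card {D : Finset V} (hXD : Disjoint X D)
    (hadj : ∀ Y, X ⊆ Y → ∀ z ∈ D, z ∉ Y →
      ∀ C, GrundyColoringOn G Y C → ∀ A ∈ C, ∃ u ∈ A, G.Adj u z) :
    grundyNumber G (X ∪ D) = grundyNumber G X + D.card := by
  induction D using Finset.induction_on with
  | empty => simp
  | insert z D hzD ih =>
    rw [Finset.disjoint_insert_right] at hXD
    have hz : z ∉ X ∪ D := by simp [hzD, hXD.1]
    rw [Finset.union_insert, grundyNumber_insert hz (hadj _ Finset.subset_union_left z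
      (Finset.mem_insert_self z D) hz), ih hXD.2 fun Y hXY w hw => hadj Y hXY w
      (Finset.mem_insert_of_mem hw), Finset.card_insert_of_notMem hzD, add_assoc]


end

/-- Kernel lemma for a clique modulator: if `F` picks `min r |E|` vertices from each
closed-neighborhood equivalence class `E` of `S = V ∖ R`, then the Grundy number of `G`
equals the Grundy number of `G[R ∪ F]` plus `|V ∖ (R ∪ F)|`. -/
theorem stmt9 (G : SimpleGraph V) [DecidableRel G.Adj] (R : Finset V) (r : ℕ)
    (hr : R.card = r) (hclique : G.IsClique ↑(Finset.univ \ R))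
    (F : Finset V) (hFS : F ⊆ Finset.univ \ R)
    (hF : ∀ v ∈ Finset.univ \ R,
      (F.filter (fun u => ∀ w, (w = u ∨ G.Adj w u) ↔ (w = v ∨ G.Adj w v))).card =
        min r (((Finset.univ \ R).filter
          (fun u => ∀ w, (w = u ∨ G.Adj w u) ↔ (w = v ∨ G.Adj w v))).card))
    (γ γ' : ℕ)
    (hγ : IsGreatest (grundySet G Finset.univ) γ)
    (hγ' : IsGreatest (grundySet G (R ∪ F)) γ') :
    γ = γ' + (Finset.univ \ (R ∪ F)).card := by
  have hS : G.IsClique (↑R : Set V)ᶜ := by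
    rwa [← Finset.compl_eq_univ_sdiff, Finset.coe_compl] at hclique
  have hFR : Disjoint F R := Finset.subset_sdiff.mp hFS |>.2
  rw [hγ.unique (isGreatest_grundyNumber G _), hγ'.unique (isGreatest_grundyNumber G _),
    ← grundyNumber_union_eq_add_card Finset.disjoint_sdiff, Finset.union_sdiff_of_subset
      (Finset.subset_univ _)]
  intro X hX z hz hzX C hC A hA
  have hzRF : z ∉ R ∪ F := (Finset.mem_sdiff.mp hz).2
  have hzR : z ∉ R := fun h => hzRF (Finset.mem_union_left F h)
  have hzS : z ∈ Finset.univ \ R := by simp [hzR]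
  set T := F.filter fun u => ∀ w, (w = u ∨ G.Adj w u) ↔ (w = z ∨ G.Adj w z)
  have hTF : T ⊆ F := Finset.filter_subset _ F
  refine hC.exists_adj_of_card_le hS hzR hzX (hTF.trans (Finset.subset_union_right.trans hX))
    (Finset.disjoint_of_subset_left hTF hFR) (fun u hu w hwu => ?_) ?_ hA
  · exact ((Finset.mem_filter.mp hu).2 w).mp (.inr hwu)
  · rw [hr]
    exact le_card_of_card_eq_min (Finset.filter_subset_filter _ hFS)
      (Finset.mem_filter.mpr ⟨hzS, fun _ => Iff.rfl⟩)
      (fun h => hzRF (Finset.mem_union_right R (Finset.filter_subset _ F h))) (hF z hzS)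
end

section
/- Let G be a graph, R a 2-cluster modulator of size r (so G − R is the disjoint union of two cliques on vertex sets S and S′). With F defined by taking min{r, |E|} vertices from each equivalence class E of the relation u ∼ v ⟺ N[u] = N[v] on S ∪ S′, there exist a set Q ⊆ F with |Q| ≤ 2r and a Grundy coloring (C′_1, …, C′_{γ′}) of G[Q ∪ R] such that some optimal Grundy coloring (C_1, …, C_γ) of G (one achieving the Grundy number) contains (C′_1, …, C′_{γ′}) as a subsequence. -/
/-!
Take an optimal Grundy coloring `C`, let `C'` be its classes meeting `R` and `Q` the vertices
outside `R` covered by `C'`. The classes are disjoint independent sets and at most `r` of them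
meet `R`, so a clique has at most `r` vertices in `Q`: applied to `S` and `S'` this gives
`|Q| ≤ 2r`, and applied to a true-twin class `E` it gives `|Q ∩ E| ≤ min r |E| = |F ∩ E|`. So if some `u ∈ Q` is not in `F`, one of its twins `f ∈ F` is not in `Q`.
Swapping two true twins is an automorphism of `G`; it maps `C` to an optimal coloring in which
`f` has taken the place of `u`, and `|Q \ F|` drops. Repeating, we reach `Q ⊆ F`.
-/

set_option linter.unusedSectionVars false

variable {V : Type*} [Fintype V] [DecidableEq V]

def verticesOf (C : List (Finset V)) : Finset V := C.toFinset.biUnion id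

theorem mem_verticesOf {C : List (Finset V)} {v : V} : v ∈ verticesOf C ↔ ∃ A ∈ C, v ∈ A := by
  simp [verticesOf]

def meetingClasses (R : Finset V) (C : List (Finset V)) : List (Finset V) :=
  C.filter fun A => (A ∩ R).Nonempty

theorem mem_verticesOf_meetingClasses {R : Finset V} {C : List (Finset V)} {v : V} :
    v ∈ verticesOf (meetingClasses R C) ↔ ∃ A ∈ C, (A ∩ R).Nonempty ∧ v ∈ A := by
  simp [mem_verticesOf, meetingClasses, and_assoc]

namespace GrundyColoringOn

variable {G : SimpleGraph V} {X : Finset V} {C : List (Finset V)}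

theorem pairwise_disjoint (hC : GrundyColoringOn G X C) : C.Pairwise Disjoint := hC.2.1

theorem mem_iff (hC : GrundyColoringOn G X C) {v : V} : v ∈ X ↔ ∃ A ∈ C, v ∈ A := hC.2.2.1 v

theorem not_adj_s12 (hC : GrundyColoringOn G X C) : ∀ A ∈ C, ∀ u ∈ A, ∀ w ∈ A, ¬ G.Adj u w :=
  hC.2.2.2.1

theorem sublist (hC : GrundyColoringOn G X C) {C' : List (Finset V)} (h : C'.Sublist C) :
    GrundyColoringOn G (verticesOf C') C' := by
  obtain ⟨hne, hdisj, -, hind, hgrundy⟩ := hC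
  obtain ⟨e, he⟩ := List.sublist_iff_exists_fin_orderEmbedding_get_eq.mp h
  refine ⟨fun A hA => hne A (h.subset hA), hdisj.sublist h, fun v => mem_verticesOf,
    fun A hA => hind A (h.subset hA), fun i j hi hj hji v hv => ?_⟩
  rw [he] at hv ⊢
  exact hgrundy _ _ _ _ (e.strictMono (Fin.mk_lt_mk.mpr hji)) v hv

theorem map {W : Type*} [Fintype W] [DecidableEq W] {G' : SimpleGraph W} (φ : G ≃g G')
    (hC : GrundyColoringOn G X C) :
    GrundyColoringOn G' (X.map φ.toEquiv.toEmbedding)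
      (C.map (Finset.map φ.toEquiv.toEmbedding)) := by
  obtain ⟨hne, hdisj, hcov, hind, hgrundy⟩ := hC
  refine ⟨?_, ?_, fun v => ?_, ?_, fun i j hi hj hji v hv => ?_⟩
  · simpa using hne
  · exact List.pairwise_map.mpr (hdisj.imp (Finset.disjoint_map _).mpr)
  · simp [Finset.mem_map_equiv, hcov]
  · simp only [List.mem_map, forall_exists_index, and_imp, forall_apply_eq_imp_iff₂,
      Finset.mem_map_equiv]
    intro A hA u hu w hw huw
    exact hind A hA _ hu _ hw (φ.symm.map_adj_iff.mpr huw)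
  · simp only [List.get_eq_getElem, List.getElem_map, Finset.mem_map_equiv] at hv ⊢
    obtain ⟨u, hu, huv⟩ := hgrundy i j (by simpa using hi) (by simpa using hj) hji _ hv
    refine ⟨φ u, (φ.toEquiv.symm_apply_apply u).symm ▸ hu, ?_⟩
    have := φ.map_adj_iff.mpr huv
    rwa [show φ (φ.toEquiv.symm v) = v from φ.toEquiv.apply_symm_apply v] at this

end GrundyColoringOn

def TrueTwins {α : Type*} (G : SimpleGraph α) (u v : α) : Prop :=
  ∀ w, (w = u ∨ G.Adj w u) ↔ (w = v ∨ G.Adj w v)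

instance {α : Type*} [Fintype α] [DecidableEq α] (G : SimpleGraph α) [DecidableRel G.Adj] :
    DecidableRel (TrueTwins G) :=
  fun u v => by unfold TrueTwins; infer_instance

namespace TrueTwins

variable {α : Type*} {G : SimpleGraph α} {u v w : α}

theorem symm (h : TrueTwins G u v) : TrueTwins G v u := fun x => (h x).symm

theorem trans (h : TrueTwins G u v) (h' : TrueTwins G v w) : TrueTwins G u w :=
  fun x => (h x).trans (h' x)

theorem adj (h : TrueTwins G u v) (hne : u ≠ v) : G.Adj u v :=
  ((h u).mp (Or.inl rfl)).resolve_left hne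

theorem adj_swap_iff [DecidableEq α] (h : TrueTwins G u v) (x y : α) :
    G.Adj (Equiv.swap u v x) (Equiv.swap u v y) ↔ G.Adj x y := by
  have h1 := h x
  have h2 := h y
  have h3 := h u
  have h4 := h v
  rw [Equiv.swap_apply_def, Equiv.swap_apply_def]
  split_ifs <;> subst_vars <;> simp_all [G.adj_comm]

def swapIso [DecidableEq α] (h : TrueTwins G u v) : G ≃g G where
  toEquiv := Equiv.swap u v
  map_rel_iff' := h.adj_swap_iff _ _

end TrueTwins

theorem exists_mem_notMem_of_card_eq_min {α : Type*} [DecidableEq α] {E F T : Finset α} {r : ℕ}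
    {u : α} (hFE : F ⊆ E) (hF : F.card = min r E.card) (hET : (E ∩ T).card ≤ r)
    (hu : u ∈ E ∩ T) (huF : u ∉ F) : ∃ f ∈ F, f ∉ T := by
  by_contra! hFT
  have hsub : insert u F ⊆ E ∩ T :=
    Finset.insert_subset hu fun f hf => Finset.mem_inter.mpr ⟨hFE hf, hFT f hf⟩
  have := Finset.card_le_card hsub
  have := Finset.card_le_card (Finset.inter_subset_left : E ∩ T ⊆ E)
  rw [Finset.card_insert_of_notMem huF] at *
  omega

theorem map_swap_sdiff_subset {α : Type*} [DecidableEq α] {T F : Finset α} {u f : α}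
    (huF : u ∉ F) (hf : f ∈ F) (hfT : f ∉ T) :
    T.map (Equiv.swap u f).toEmbedding \ F ⊆ (T \ F).erase u := by
  intro x hx
  simp only [Finset.mem_sdiff, Finset.mem_map_equiv, Equiv.symm_swap] at hx
  obtain ⟨hxT, hxF⟩ := hx
  have hxu : x ≠ u := by rintro rfl; simp_all
  have hxf : x ≠ f := by rintro rfl; exact hxF hf
  rw [Equiv.swap_apply_of_ne_of_ne hxu hxf] at hxT
  exact Finset.mem_erase.mpr ⟨hxu, Finset.mem_sdiff.mpr ⟨hxT, hxF⟩⟩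

theorem card_le_of_isClique_subset_meetingClasses {G : SimpleGraph V} {R : Finset V}
    {C : List (Finset V)} (hdisj : C.Pairwise Disjoint)
    (hind : ∀ A ∈ C, ∀ u ∈ A, ∀ w ∈ A, ¬ G.Adj u w) {K : Finset V} (hK : G.IsClique (K : Set V))
    (hKC : K ⊆ verticesOf (meetingClasses R C)) : K.card ≤ R.card := by
  have hmem : ∀ v ∈ K, ∃ A ∈ C, ∃ x ∈ R, x ∈ A ∧ v ∈ A := fun v hv => by
    obtain ⟨A, hA, ⟨x, hx⟩, hvA⟩ := mem_verticesOf_meetingClasses.mp (hKC hv)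
    exact ⟨A, hA, x, (Finset.mem_inter.mp hx).2, (Finset.mem_inter.mp hx).1, hvA⟩
  choose! A hA x hxR hxA hvA using hmem
  refine Finset.card_le_card_of_injOn x hxR fun v hv w hw hvw => ?_
  have hAvw : A v = A w := by
    by_contra hne
    exact Finset.disjoint_left.mp (hdisj.forall (hA v hv) (hA w hw) hne)
      (hxA v hv) (hvw ▸ hxA w hw)
  by_contra hne
  exact hind (A v) (hA v hv) v (hvA v hv) w (hAvw ▸ hvA w hw) (hK hv hw hne)

theorem card_verticesOf_meetingClasses_sdiff_le {G : SimpleGraph V} {R S S' : Finset V}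
    (hS : G.IsClique (S : Set V)) (hS' : G.IsClique (S' : Set V)) (hU : ∀ v ∉ R, v ∈ S ∪ S')
    {C : List (Finset V)} (hdisj : C.Pairwise Disjoint)
    (hind : ∀ A ∈ C, ∀ u ∈ A, ∀ w ∈ A, ¬ G.Adj u w) :
    (verticesOf (meetingClasses R C) \ R).card ≤ 2 * R.card := by
  set T := verticesOf (meetingClasses R C)
  have hcard : ∀ K : Finset V, G.IsClique (K : Set V) → (T ∩ K).card ≤ R.card := fun K hK =>
    card_le_of_isClique_subset_meetingClasses hdisj hind (hK.subset Finset.inter_subset_right)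
      Finset.inter_subset_left
  calc (T \ R).card ≤ (T ∩ S ∪ T ∩ S').card := Finset.card_le_card fun v hv => by
        obtain ⟨hvT, hvR⟩ := Finset.mem_sdiff.mp hv
        rw [← Finset.inter_union_distrib_left]
        exact Finset.mem_inter.mpr ⟨hvT, hU v hvR⟩
    _ ≤ (T ∩ S).card + (T ∩ S').card := Finset.card_union_le _ _
    _ ≤ 2 * R.card := by linarith [hcard S hS, hcard S' hS']

theorem verticesOf_meetingClasses_map {R : Finset V} (C : List (Finset V)) {e : V ≃ V}
    (he : ∀ x ∈ R, e x = x) :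
    verticesOf (meetingClasses R (C.map (Finset.map e.toEmbedding))) =
      (verticesOf (meetingClasses R C)).map e.toEmbedding := by
  have hR : ∀ A : Finset V, A.map e.toEmbedding ∩ R = A ∩ R := fun A => by
    ext x
    simp only [Finset.mem_inter, Finset.mem_map_equiv, and_congr_left_iff]
    intro hx
    rw [e.symm_apply_eq.mpr (he x hx).symm]
  ext v
  simp [mem_verticesOf_meetingClasses, Finset.mem_map_equiv, hR]

theorem exists_trueTwin_mem_notMem_meetingClasses {G : SimpleGraph V} [DecidableRel G.Adj]
    {R U F : Finset V} (hFU : F ⊆ U)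
    (hF : ∀ v ∈ U, (F.filter (TrueTwins G · v)).card = min R.card (U.filter (TrueTwins G · v)).card)
    {C : List (Finset V)} (hdisj : C.Pairwise Disjoint)
    (hind : ∀ A ∈ C, ∀ u ∈ A, ∀ w ∈ A, ¬ G.Adj u w) {u : V} (huU : u ∈ U)
    (huC : u ∈ verticesOf (meetingClasses R C)) (huF : u ∉ F) :
    ∃ f ∈ F, f ∉ verticesOf (meetingClasses R C) ∧ TrueTwins G u f := by
  set T := verticesOf (meetingClasses R C)
  set E := U.filter (TrueTwins G · u)
  have hclique : G.IsClique ((E ∩ T : Finset V) : Set V) := fun x hx y hy hxy =>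
    ((Finset.mem_filter.mp (Finset.mem_inter.mp hx).1).2.trans
      (Finset.mem_filter.mp (Finset.mem_inter.mp hy).1).2.symm).adj hxy
  obtain ⟨f, hf, hfT⟩ := exists_mem_notMem_of_card_eq_min (Finset.filter_subset_filter _ hFU)
    (hF u huU)
    (card_le_of_isClique_subset_meetingClasses hdisj hind hclique Finset.inter_subset_right)
    (Finset.mem_inter.mpr ⟨Finset.mem_filter.mpr ⟨huU, fun _ => Iff.rfl⟩, huC⟩)
    (fun h => huF (Finset.mem_filter.mp h).1)
  exact ⟨f, (Finset.mem_filter.mp hf).1, hfT, (Finset.mem_filter.mp hf).2.symm⟩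

theorem exists_grundyColoring_verticesOf_meetingClasses_subset {G : SimpleGraph V}
    {R F : Finset V}
    (hswap : ∀ C, GrundyColoringOn G Finset.univ C → ∀ u ∈ verticesOf (meetingClasses R C),
      u ∉ R ∪ F → ∃ f ∈ F, f ∉ verticesOf (meetingClasses R C) ∧ f ∉ R ∧ TrueTwins G u f)
    {C₀ : List (Finset V)} (hC₀ : GrundyColoringOn G Finset.univ C₀) :
    ∃ C, GrundyColoringOn G Finset.univ C ∧ C.length = C₀.length ∧
      verticesOf (meetingClasses R C) ⊆ R ∪ F := by
  induction hn : (verticesOf (meetingClasses R C₀) \ (R ∪ F)).card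
    using Nat.strong_induction_on generalizing C₀ with
  | _ n ih =>
  obtain hempty | ⟨u, hu⟩ := (verticesOf (meetingClasses R C₀) \ (R ∪ F)).eq_empty_or_nonempty
  · exact ⟨C₀, hC₀, rfl, Finset.sdiff_eq_empty_iff_subset.mp hempty⟩
  obtain ⟨huT, huRF⟩ := Finset.mem_sdiff.mp hu
  obtain ⟨f, hfF, hfT, hfR, htwin⟩ := hswap C₀ hC₀ u huT huRF
  have huR : u ∉ R := fun h => huRF (Finset.mem_union_left _ h)
  have hC₁ := hC₀.map htwin.swapIso
  rw [Finset.map_univ_equiv] at hC₁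
  have hT := verticesOf_meetingClasses_map C₀ (e := htwin.swapIso.toEquiv) fun x hx =>
    Equiv.swap_apply_of_ne_of_ne (ne_of_mem_of_not_mem hx huR) (ne_of_mem_of_not_mem hx hfR)
  have hlt : (verticesOf (meetingClasses R (C₀.map (Finset.map htwin.swapIso.toEquiv.toEmbedding)))
      \ (R ∪ F)).card < n := by
    rw [hT, ← hn]
    exact (Finset.card_le_card
      (map_swap_sdiff_subset huRF (Finset.mem_union_right _ hfF) hfT)).trans_lt
        (Finset.card_erase_lt_of_mem hu)
  obtain ⟨C, hC, hlen, hCRF⟩ := ih _ hlt hC₁ rfl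
  exact ⟨C, hC, hlen.trans (List.length_map _), hCRF⟩

theorem stmt12_general (G : SimpleGraph V) [DecidableRel G.Adj] (R S S' : Finset V) (r : ℕ)
    (hr : R.card = r)
    (hcover : S ∪ S' = Finset.univ \ R)
    (hS : G.IsClique ↑S) (hS' : G.IsClique ↑S')
    (F : Finset V) (hFS : F ⊆ S ∪ S')
    (hF : ∀ v ∈ S ∪ S',
      (F.filter (fun u => ∀ w, (w = u ∨ G.Adj w u) ↔ (w = v ∨ G.Adj w v))).card =
        min r (((S ∪ S').filter
          (fun u => ∀ w, (w = u ∨ G.Adj w u) ↔ (w = v ∨ G.Adj w v))).card))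
    (γ : ℕ) (hγ : IsGreatest (grundySet G Finset.univ) γ) :
    ∃ Q ⊆ F, Q.card ≤ 2 * r ∧
      ∃ C' : List (Finset V), GrundyColoringOn G (Q ∪ R) C' ∧
        ∃ C : List (Finset V), GrundyColoringOn G Finset.univ C ∧ C.length = γ ∧
          C'.Sublist C := by
  subst hr
  have hU : ∀ v, v ∈ S ∪ S' ↔ v ∉ R := by simp [hcover]
  obtain ⟨C₀, hC₀, rfl⟩ := hγ.1
  obtain ⟨C, hC, hlen, hCRF⟩ := exists_grundyColoring_verticesOf_meetingClasses_subset
    (fun C hC u huT huRF => by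
      obtain ⟨f, hf, hfT, htwin⟩ := exists_trueTwin_mem_notMem_meetingClasses hFS hF
        hC.pairwise_disjoint hC.not_adj_s12 ((hU u).mpr fun h => huRF (Finset.mem_union_left _ h)) huT
        fun h => huRF (Finset.mem_union_right _ h)
      exact ⟨f, hf, hfT, (hU f).mp (hFS hf), htwin⟩) hC₀
  set T := verticesOf (meetingClasses R C)
  have hRT : R ⊆ T := fun x hx => by
    obtain ⟨A, hA, hxA⟩ := hC.mem_iff.mp (Finset.mem_univ x)
    exact mem_verticesOf_meetingClasses.mpr ⟨A, hA, ⟨x, Finset.mem_inter.mpr ⟨hxA, hx⟩⟩, hxA⟩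
  refine ⟨T \ R, fun v hv => ?_, ?_, meetingClasses R C, ?_, C, hC, hlen, List.filter_sublist⟩
  · obtain ⟨hvT, hvR⟩ := Finset.mem_sdiff.mp hv
    exact (Finset.mem_union.mp (hCRF hvT)).resolve_left hvR
  · exact card_verticesOf_meetingClasses_sdiff_le hS hS' (fun v => (hU v).mpr)
      hC.pairwise_disjoint hC.not_adj_s12
  · rw [Finset.sdiff_union_of_subset hRT]
    exact hC.sublist List.filter_sublist

/-- For a 2-cluster modulator `R` (so `G - R` is the disjoint union of two cliques `S`, `S'`)
and `F` picking `min r |E|` vertices from each closed-neighborhood equivalence class `E`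
of `S ∪ S'`, there are `Q ⊆ F` with `|Q| ≤ 2r` and a Grundy coloring of `G[Q ∪ R]` that
occurs as a subsequence of an optimal Grundy coloring of `G`. -/
theorem stmt12 (G : SimpleGraph V) [DecidableRel G.Adj] (R S S' : Finset V) (r : ℕ)
    (hr : R.card = r)
    (hdisj : Disjoint S S') (hcover : S ∪ S' = Finset.univ \ R)
    (hSne : S.Nonempty) (hS'ne : S'.Nonempty)
    (hS : G.IsClique ↑S) (hS' : G.IsClique ↑S')
    (hsep : ∀ u ∈ S, ∀ v ∈ S', ¬ G.Adj u v)
    (F : Finset V) (hFS : F ⊆ S ∪ S')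
    (hF : ∀ v ∈ S ∪ S',
      (F.filter (fun u => ∀ w, (w = u ∨ G.Adj w u) ↔ (w = v ∨ G.Adj w v))).card =
        min r (((S ∪ S').filter
          (fun u => ∀ w, (w = u ∨ G.Adj w u) ↔ (w = v ∨ G.Adj w v))).card))
    (γ : ℕ) (hγ : IsGreatest (grundySet G Finset.univ) γ) :
    ∃ Q ⊆ F, Q.card ≤ 2 * r ∧
      ∃ C' : List (Finset V), GrundyColoringOn G (Q ∪ R) C' ∧
        ∃ C : List (Finset V), GrundyColoringOn G Finset.univ C ∧ C.length = γ ∧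
          C'.Sublist C :=
  stmt12_general G R S S' r hr hcover hS hS' F hFS hF γ hγ
end

section
/- Let G be a graph, R a 2-cluster modulator with G − R the disjoint union of cliques on S and S′, Q ⊆ V(G)∖R, and let (C′_1, …, C′_{γ′}) be a Grundy coloring of G[Q ∪ R] that is extendable (i.e., it occurs as a subsequence of some optimal Grundy coloring of G in which every class containing a vertex of R lies in the subsequence and all other classes are disjoint from R ∪ Q). Then the Grundy number of G equals γ′ + max{|S∖Q|, |S′∖Q|}. -/
variable {V : Type*} [Fintype V] [DecidableEq V]

/-!
Let `C` be the optimal Grundy coloring of `G` that `C'` extends to. The classes of `C` outside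
`C'` are the free classes; they partition `(S ∪ S') ∖ Q`, so it suffices to show that there are
exactly `max {|S ∖ Q|, |S' ∖ Q|}` of them. A clique meets every (independent) class at most
once, which gives `≥`. For `≤`, take a vertex `v` of the last free class, say `v ∈ S`: every
other free class contains a neighbor of `v`, which has to lie in `S` since there are no edges
between `S` and `S'`, so every free class meets `S ∖ Q`.
-/

theorem List.Sublist.length_eq_length_add_card_toFinset_sdiff {α : Type*} [DecidableEq α]
    {l₁ l₂ : List α} (h : l₁.Sublist l₂) (hl₂ : l₂.Nodup) :
    l₂.length = l₁.length + (l₂.toFinset \ l₁.toFinset).card := by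
  have hsub : l₁.toFinset ⊆ l₂.toFinset := fun a ha =>
    List.mem_toFinset.mpr (h.subset (List.mem_toFinset.mp ha))
  rw [← List.toFinset_card_of_nodup hl₂, ← List.toFinset_card_of_nodup (h.nodup hl₂),
    ← Finset.card_sdiff_add_card_eq_card hsub, add_comm]

namespace GrundyColoringOn

variable {α : Type*} {G : SimpleGraph α} {X : Finset α} {C : List (Finset α)}
  {𝓕 : Finset (Finset α)}

theorem nodup (hC : GrundyColoringOn G X C) : C.Nodup :=
  hC.2.1.imp_of_mem fun {A _} hA _ hAB hAeq => by
    subst hAeq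
    obtain ⟨v, hv⟩ := hC.1 A hA
    exact Finset.disjoint_left.mp hAB hv hv

theorem exists_mem_forall_exists_adj [DecidableEq α] (hC : GrundyColoringOn G X C)
    (h𝓕 : ∀ A ∈ 𝓕, A ∈ C) (hne : 𝓕.Nonempty) :
    ∃ A ∈ 𝓕, ∀ v ∈ A, ∀ B ∈ 𝓕, B ≠ A → ∃ u ∈ B, G.Adj u v := by
  obtain ⟨A, hA, hmax⟩ := 𝓕.exists_max_image (C.idxOf ·) hne
  refine ⟨A, hA, fun v hv B hB hBA => ?_⟩
  have hlt : C.idxOf B < C.idxOf A :=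
    (hmax B hB).lt_of_ne fun h => hBA ((List.idxOf_inj (h𝓕 B hB)).mp h)
  have hAlen := List.idxOf_lt_length_of_mem (h𝓕 A hA)
  have hBlen := List.idxOf_lt_length_of_mem (h𝓕 B hB)
  have hvA : v ∈ C.get ⟨_, hAlen⟩ := by rwa [List.get_eq_getElem, List.getElem_idxOf]
  simpa only [List.get_eq_getElem, List.getElem_idxOf] using
    hC.2.2.2.2 _ _ hAlen hBlen hlt v hvA

theorem card_le_card_of_forall_inter_nonempty {Y : Finset α} [DecidableEq α]
    (hC : GrundyColoringOn G X C) (h𝓕 : ∀ A ∈ 𝓕, A ∈ C)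
    (hY : ∀ A ∈ 𝓕, (A ∩ Y).Nonempty) :
    𝓕.card ≤ Y.card := by
  refine Finset.card_le_card_of_forall_subsingleton (fun A v => v ∈ A) (fun A hA => ?_) ?_
  · obtain ⟨v, hv⟩ := hY A hA
    exact ⟨v, (Finset.mem_inter.mp hv).2, (Finset.mem_inter.mp hv).1⟩
  · rintro v - A ⟨hA, hvA⟩ B ⟨hB, hvB⟩
    by_contra hAB
    exact Finset.disjoint_left.mp (hC.2.1.forall (h𝓕 A hA) (h𝓕 B hB) hAB) hvA hvB

theorem card_le_card_of_isClique {Y : Finset α} (hC : GrundyColoringOn G X C)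
    (h𝓕 : ∀ A ∈ 𝓕, A ∈ C) (hY : G.IsClique (Y : Set α))
    (hcov : ∀ v ∈ Y, ∃ A ∈ 𝓕, v ∈ A) :
    Y.card ≤ 𝓕.card := by
  refine Finset.card_le_card_of_forall_subsingleton (fun v A => v ∈ A) hcov ?_
  rintro A hA u ⟨hu, huA⟩ w ⟨hw, hwA⟩
  by_contra huw
  exact hC.2.2.2.1 A (h𝓕 A hA) u huA w hwA (hY hu hw huw)

theorem card_le_or_card_le_of_subset_union {Y Z : Finset α} [DecidableEq α]
    (hC : GrundyColoringOn G X C) (h𝓕 : ∀ A ∈ 𝓕, A ∈ C)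
    (hYZ : ∀ u ∈ Y, ∀ w ∈ Z, ¬ G.Adj u w) (hsub : ∀ A ∈ 𝓕, A ⊆ Y ∪ Z) :
    𝓕.card ≤ Y.card ∨ 𝓕.card ≤ Z.card := by
  rcases 𝓕.eq_empty_or_nonempty with rfl | hne
  · simp
  obtain ⟨A, hA, hlast⟩ := hC.exists_mem_forall_exists_adj h𝓕 hne
  obtain ⟨v, hv⟩ := hC.1 A (h𝓕 A hA)
  wlog hvY : v ∈ Y generalizing Y Z
  · have hvZ : v ∈ Z := (Finset.mem_union.mp (hsub A hA hv)).resolve_left hvY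
    exact (this (fun w hw u hu huw => hYZ u hu w hw huw.symm)
      (fun B hB => Finset.union_comm Y Z ▸ hsub B hB) hvZ).symm
  left
  refine hC.card_le_card_of_forall_inter_nonempty h𝓕 fun B hB => ?_
  by_cases hBA : B = A
  · exact ⟨v, Finset.mem_inter.mpr ⟨hBA ▸ hv, hvY⟩⟩
  obtain ⟨u, huB, huv⟩ := hlast v hv B hB hBA
  have huY : u ∈ Y := (Finset.mem_union.mp (hsub B hB huB)).resolve_right
    fun huZ => hYZ v hvY u huZ huv.symm
  exact ⟨u, Finset.mem_inter.mpr ⟨huB, huY⟩⟩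

end GrundyColoringOn

theorem stmt13_general (G : SimpleGraph V) (R S S' : Finset V)
    (hcover : S ∪ S' = Finset.univ \ R)
    (hS : G.IsClique ↑S) (hS' : G.IsClique ↑S')
    (hsep : ∀ u ∈ S, ∀ v ∈ S', ¬ G.Adj u v)
    (Q : Finset V)
    (C' : List (Finset V)) (hC' : GrundyColoringOn G (Q ∪ R) C')
    (γ : ℕ)
    (hext : ∃ C : List (Finset V), GrundyColoringOn G Finset.univ C ∧ C.length = γ ∧
      C'.Sublist C ∧
      (∀ A ∈ C, (∃ v ∈ A, v ∈ R) → A ∈ C') ∧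
      (∀ A ∈ C, A ∉ C' → ∀ v ∈ A, v ∉ R ∪ Q)) :
    γ = C'.length + max (S \ Q).card (S' \ Q).card := by
  obtain ⟨C, hC, rfl, hsub, -, havoid⟩ := hext
  rw [hsub.length_eq_length_add_card_toFinset_sdiff hC.nodup]
  set 𝓕 := C.toFinset \ C'.toFinset
  have h𝓕C : ∀ A ∈ 𝓕, A ∈ C := fun A hA =>
    List.mem_toFinset.mp (Finset.mem_sdiff.mp hA).1
  have hfree : ∀ v, v ∈ S \ Q ∪ S' \ Q ↔ v ∉ R ∪ Q := fun v => by
    rw [← Finset.union_sdiff_distrib, hcover]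
    simp only [Finset.mem_sdiff, Finset.mem_univ, Finset.mem_union]
    tauto
  have h𝓕sub : ∀ A ∈ 𝓕, A ⊆ S \ Q ∪ S' \ Q := fun A hA v hvA => (hfree v).mpr <|
    havoid A (h𝓕C A hA) (List.mem_toFinset.not.mp (Finset.mem_sdiff.mp hA).2) v hvA
  have h𝓕cov : ∀ v ∈ S \ Q ∪ S' \ Q, ∃ A ∈ 𝓕, v ∈ A := by
    intro v hv
    obtain ⟨A, hA, hvA⟩ := (hC.2.2.1 v).mp (Finset.mem_univ v)
    refine ⟨A, Finset.mem_sdiff.mpr ⟨List.mem_toFinset.mpr hA, fun hA' => ?_⟩, hvA⟩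
    exact (hfree v).mp hv <|
      Finset.union_comm Q R ▸ (hC'.2.2.1 v).mpr ⟨A, List.mem_toFinset.mp hA', hvA⟩
  have hge : max (S \ Q).card (S' \ Q).card ≤ 𝓕.card := max_le
    (hC.card_le_card_of_isClique h𝓕C (hS.subset (by simp))
      fun v hv => h𝓕cov v (Finset.mem_union_left _ hv))
    (hC.card_le_card_of_isClique h𝓕C (hS'.subset (by simp))
      fun v hv => h𝓕cov v (Finset.mem_union_right _ hv))
  have hle := hC.card_le_or_card_le_of_subset_union h𝓕C
    (fun u hu w hw => hsep u (Finset.mem_sdiff.mp hu).1 w (Finset.mem_sdiff.mp hw).1) h𝓕sub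
  omega

/-- If a Grundy coloring of `G[Q ∪ R]` is extendable (it is a subsequence of some optimal
Grundy coloring of `G` in which every class meeting `R` belongs to the subsequence and all
other classes avoid `R ∪ Q`), then the Grundy number of `G` is
`γ' + max {|S ∖ Q|, |S' ∖ Q|}`. -/
theorem stmt13 (G : SimpleGraph V) (R S S' : Finset V)
    (hdisj : Disjoint S S') (hcover : S ∪ S' = Finset.univ \ R)
    (hSne : S.Nonempty) (hS'ne : S'.Nonempty)
    (hS : G.IsClique ↑S) (hS' : G.IsClique ↑S')
    (hsep : ∀ u ∈ S, ∀ v ∈ S', ¬ G.Adj u v)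
    (Q : Finset V) (hQ : Q ⊆ Finset.univ \ R)
    (C' : List (Finset V)) (hC' : GrundyColoringOn G (Q ∪ R) C')
    (γ : ℕ) (hγ : IsGreatest (grundySet G Finset.univ) γ)
    (hext : ∃ C : List (Finset V), GrundyColoringOn G Finset.univ C ∧ C.length = γ ∧
      C'.Sublist C ∧
      (∀ A ∈ C, (∃ v ∈ A, v ∈ R) → A ∈ C') ∧
      (∀ A ∈ C, A ∉ C' → ∀ v ∈ A, v ∉ R ∪ Q)) :
    γ = C'.length + max (S \ Q).card (S' \ Q).card :=
  stmt13_general G R S S' hcover hS hS' hsep Q C' hC' γ hext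
end

section
/- Let G be a graph, R ⊆ V(G), and suppose G − R has connected components K_1, …, K_k, each a complete graph with vertex set S_i. Let (C_1, …, C_γ) be a Grundy coloring of G, and let C_{α_1}, …, C_{α_t} (α_1 < ⋯ < α_t) be those color classes that contain no vertex of R. For a class C, define CL(C) = {i : C ∩ S_i ≠ ∅}. Then CL(C_{α_t}) ⊆ CL(C_{α_{t−1}}) ⊆ ⋯ ⊆ CL(C_{α_1}). -/
variable {V : Type*} [Fintype V] [DecidableEq V]

/-- If `G - R` is the disjoint union of cliques `S 1, …, S k`, then among the color classes
of a Grundy coloring of `G` that avoid `R`, the sets of cliques they meet form a decreasing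
chain: a later such class meets only cliques met by any earlier such class. -/
theorem stmt14 (G : SimpleGraph V) (R : Finset V) (k : ℕ) (S : Fin k → Finset V)
    (hcl : ∀ i, G.IsClique ↑(S i))
    (hdisj : ∀ i j, i ≠ j → Disjoint (S i) (S j))
    (hcover : Finset.univ.biUnion S = Finset.univ \ R)
    (hsep : ∀ i j, i ≠ j → ∀ u ∈ S i, ∀ v ∈ S j, ¬ G.Adj u v)
    (C : List (Finset V)) (hC : GrundyColoringOn G Finset.univ C) :
    ∀ a b : ℕ, ∀ ha : a < C.length, ∀ hb : b < C.length, a < b →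
      Disjoint (C.get ⟨a, ha⟩) R → Disjoint (C.get ⟨b, hb⟩) R →
      ∀ l : Fin k, ((C.get ⟨b, hb⟩) ∩ S l).Nonempty → ((C.get ⟨a, ha⟩) ∩ S l).Nonempty := by
  intro a b ha hb hab hRa hRb l hne
  obtain ⟨v, hv⟩ := hne
  rw [Finset.mem_inter] at hv
  obtain ⟨u, hu, hadj⟩ := hC.2.2.2.2 b a hb ha hab v hv.1
  have huR : u ∉ R := fun h => (Finset.disjoint_left.mp hRa hu) h
  have : u ∈ Finset.univ.biUnion S := by
    rw [hcover, Finset.mem_sdiff]; exact ⟨Finset.mem_univ u, huR⟩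
  obtain ⟨j, -, hj⟩ := Finset.mem_biUnion.mp this
  have hjl : j = l := by
    by_contra hne
    exact hsep j l hne u hj v hv.2 hadj
  exact ⟨u, Finset.mem_inter.mpr ⟨hu, hjl ▸ hj⟩⟩
end
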